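/- arXiv:2011.04219 — 8 statements merged into one kernel-verified Lean document; each statement's English description precedes it below -/
import Mathlib

section
/- Let m, n, p be positive integers, δ ≥ 0 a real number, L, U ∈ ℝ^p, and let q ∈ [0,1]^{m×p} satisfy ∑_{ℓ=1}^p q_{iℓ} = 1 for every i ∈ {1,…,m}. Consider the polytope P := {x ∈ ℝ^m : 0 ≤ x_i ≤ 1 for all i, ∑_{i=1}^m x_i = n, and for all ℓ ∈ {1,…,p}, L_ℓ − δn ≤ ∑_{i=1}^m q_{iℓ} x_i ≤ U_ℓ + δn}. Then every extreme point x of P has at most min(m, p) fractional coordinates, i.e., #{i : 0 < x_i < 1} ≤ min(m, p). -/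
/-!
At an extreme point `x`, let `S` be the set of fractional coordinates. If `S` had more elements
than `p`, the linear map `x ↦ (∑ i, q i ℓ * x i)_ℓ`, restricted to vectors supported on `S`,
would have a nonzero kernel vector `d`. Moving along `±d` changes neither the group sums nor,
because the rows of `q` sum to one, the total `∑ i, x i`; and for small steps it keeps every
coordinate in `[0, 1]`, since `d` only moves coordinates lying strictly inside. So `x` would be
the midpoint of two distinct points of `P`.
-/

open Set Filter Topology Module

theorem eq_zero_of_add_mem_of_sub_mem_of_mem_extremePoints {𝕜 E : Type*} [Field 𝕜] [LinearOrder 𝕜]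
    [IsStrictOrderedRing 𝕜] [AddCommGroup E] [Module 𝕜 E] {A : Set E} {x v : E}
    (hx : x ∈ A.extremePoints 𝕜) (hadd : x + v ∈ A) (hsub : x - v ∈ A) : v = 0 := by
  have hmid : x ∈ openSegment 𝕜 (x + v) (x - v) :=
    ⟨1 / 2, 1 / 2, by norm_num, by norm_num, by norm_num, by module⟩
  simpa using (mem_extremePoints.1 hx).2 _ hadd _ hsub hmid

theorem exists_ne_zero_supported_map_eq_zero {K ι M : Type*} [Field K] [Fintype ι]
    [AddCommGroup M] [Module K M] [FiniteDimensional K M] (Φ : (ι → K) →ₗ[K] M) {s : Set ι}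
    (hs : finrank K M < s.ncard) : ∃ d : ι → K, d ≠ 0 ∧ (∀ i ∉ s, d i = 0) ∧ Φ d = 0 := by
  classical
  set extend := Function.ExtendByZero.linearMap K ((↑) : s → ι)
  have hker : LinearMap.ker (Φ ∘ₗ extend) ≠ ⊥ := by
    apply LinearMap.ker_ne_bot_of_finrank_lt
    rwa [finrank_fintype_fun_eq_card, ← Nat.card_eq_fintype_card, Nat.card_coe_set_eq]
  obtain ⟨g, hg, hg0⟩ := Submodule.exists_mem_ne_zero_of_ne_bot hker
  have hextend (i : s) : extend g i = g i := Subtype.val_injective.extend_apply _ _ i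
  refine ⟨extend g, fun h ↦ hg0 (funext fun i ↦ by simpa [hextend] using congrFun h i),
    fun i hi ↦ Function.extend_apply' _ _ _ fun ⟨j, hj⟩ ↦ hi (hj ▸ j.2), hg⟩

theorem eventually_forall_add_mul_mem {ι : Type*} [Finite ι] {T : Set ℝ} {x d : ι → ℝ}
    (hx : ∀ i, x i ∈ T) (hd : ∀ i, d i ≠ 0 → x i ∈ interior T) :
    ∀ᶠ t in 𝓝 (0 : ℝ), ∀ i, x i + t * d i ∈ T := by
  refine eventually_all.2 fun i ↦ ?_
  by_cases hdi : d i = 0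
  · simp [hdi, hx i]
  have hline : Tendsto (fun t : ℝ ↦ x i + t * d i) (𝓝 0) (𝓝 (x i)) := by
    simpa using ((continuous_id.mul continuous_const).const_add (x i)).tendsto (0 : ℝ)
  exact (hline.eventually (isOpen_interior.mem_nhds (hd i hdi))).mono fun _ ht ↦
    interior_subset ht

theorem ncard_setOf_mem_Ioo_le_finrank_of_mem_extremePoints {ι M : Type*} [Fintype ι]
    [AddCommGroup M] [Module ℝ M] [FiniteDimensional ℝ M] (Φ : (ι → ℝ) →ₗ[ℝ] M) (C : Set M)
    {x : ι → ℝ} (hx : x ∈ ({y | ∀ i, y i ∈ Icc 0 1} ∩ Φ ⁻¹' C).extremePoints ℝ) :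
    {i | x i ∈ Ioo 0 1}.ncard ≤ finrank ℝ M := by
  by_contra! hcard
  obtain ⟨d, hd0, hds, hΦd⟩ := exists_ne_zero_supported_map_eq_zero Φ hcard
  have hmove : ∀ᶠ t in 𝓝 (0 : ℝ), ∀ i, x i + t * d i ∈ Icc 0 1 :=
    eventually_forall_add_mul_mem hx.1.1 fun i hi ↦ by
      rw [interior_Icc]; exact not_imp_comm.1 (hds i) hi
  have hmove' : ∀ᶠ t in 𝓝 (0 : ℝ), ∀ i, x i + -t * d i ∈ Icc 0 1 :=
    (continuous_neg.tendsto' 0 0 neg_zero).eventually hmove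
  obtain ⟨t, ⟨hplus, hminus⟩, ht⟩ :=
    (((hmove.and hmove').filter_mono nhdsWithin_le_nhds).and
      (self_mem_nhdsWithin : ∀ᶠ t in 𝓝[>] (0 : ℝ), 0 < t)).exists
  refine smul_ne_zero (ne_of_gt ht) hd0
    (eq_zero_of_add_mem_of_sub_mem_of_mem_extremePoints hx ⟨fun i ↦ ?_, ?_⟩ ⟨fun i ↦ ?_, ?_⟩)
  · simpa using hplus i
  · simpa [hΦd] using hx.1.2
  · simpa [sub_eq_add_neg] using hminus i
  · simpa [hΦd] using hx.1.2

theorem stmt3_general (m n p : ℕ) (δ : ℝ) (L U : Fin p → ℝ) (q : Fin m → Fin p → ℝ)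
    (hqsum : ∀ i, ∑ ℓ, q i ℓ = 1)
    (P : Set (Fin m → ℝ))
    (hP : P = {x | (∀ i, 0 ≤ x i ∧ x i ≤ 1) ∧ (∑ i, x i = (n : ℝ)) ∧
      ∀ ℓ, L ℓ - δ * n ≤ ∑ i, q i ℓ * x i ∧ ∑ i, q i ℓ * x i ≤ U ℓ + δ * n})
    (x : Fin m → ℝ) (hx : x ∈ Set.extremePoints ℝ P) :
    {i | 0 < x i ∧ x i < 1}.ncard ≤ min m p := by
  have htotal (y : Fin m → ℝ) : ∑ ℓ, ∑ i, q i ℓ * y i = ∑ i, y i := by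
    simp_rw [Finset.sum_comm (γ := Fin p), ← Finset.sum_mul, hqsum, one_mul]
  have hPeq : P = {y | ∀ i, y i ∈ Icc 0 1} ∩ (Matrix.of q).transpose.mulVecLin ⁻¹'
      {c | ∑ ℓ, c ℓ = n ∧ ∀ ℓ, L ℓ - δ * n ≤ c ℓ ∧ c ℓ ≤ U ℓ + δ * n} := by
    have hΦ (y : Fin m → ℝ) (ℓ : Fin p) :
        (Matrix.of q).transpose.mulVecLin y ℓ = ∑ i, q i ℓ * y i := rfl
    ext y
    simp only [hP, mem_ofPred_eq, mem_inter_iff, mem_preimage, mem_Icc, hΦ, htotal]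
  refine le_min (by simpa using ncard_le_card {i | 0 < x i ∧ x i < 1}) ?_
  exact (ncard_setOf_mem_Ioo_le_finrank_of_mem_extremePoints _ _ (hPeq ▸ hx)).trans_eq
    (finrank_fin_fun ℝ)

/-- **Extreme points of the denoised LP polytope have at most `min m p` fractional
coordinates (one protected attribute).** -/
theorem stmt3 (m n p : ℕ) (hm : 0 < m) (hn : 0 < n) (hp : 0 < p)
    (δ : ℝ) (hδ : 0 ≤ δ) (L U : Fin p → ℝ)
    (q : Fin m → Fin p → ℝ) (hq : ∀ i ℓ, q i ℓ ∈ Set.Icc (0 : ℝ) 1)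
    (hqsum : ∀ i, ∑ ℓ, q i ℓ = 1)
    (P : Set (Fin m → ℝ))
    (hP : P = {x | (∀ i, 0 ≤ x i ∧ x i ≤ 1) ∧ (∑ i, x i = (n : ℝ)) ∧
      ∀ ℓ, L ℓ - δ * n ≤ ∑ i, q i ℓ * x i ∧ ∑ i, q i ℓ * x i ≤ U ℓ + δ * n})
    (x : Fin m → ℝ) (hx : x ∈ Set.extremePoints ℝ P) :
    {i | 0 < x i ∧ x i < 1}.ncard ≤ min m p :=
  stmt3_general m n p δ L U q hqsum P hP x hx
end

section
/- Let m, n, s and p_1,…,p_s be positive integers, δ ≥ 0 a real number, and for each k ∈ {1,…,s} let L^{(k)}, U^{(k)} ∈ ℝ^{p_k} and q^{(k)} ∈ [0,1]^{m×p_k} with ∑_{ℓ=1}^{p_k} q^{(k)}_{iℓ} = 1 for every i. Consider the polytope P := {x ∈ ℝ^m : 0 ≤ x_i ≤ 1 for all i, ∑_{i=1}^m x_i = n, and for all k and all ℓ ∈ {1,…,p_k}, L^{(k)}_ℓ − δn ≤ ∑_{i=1}^m q^{(k)}_{iℓ} x_i ≤ U^{(k)}_ℓ + δn}. Then every extreme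 point x of P has at most min(m, 1 + ∑_{k=1}^s (p_k − 1)) fractional coordinates, i.e., #{i : 0 < x_i < 1} ≤ min(m, 1 + ∑_{k=1}^s (p_k − 1)). -/
/-!
If an extreme point `x` had more fractional coordinates than `1 + ∑ k, (p k - 1)`, the
homogeneous system "`d` vanishes off the fractional coordinates, `∑ i, d i = 0`, and
`∑ i, q k i ℓ * d i = 0` for every `k` and every value `ℓ` but the last one" would have more
unknowns than equations, hence a solution `d ≠ 0`. Because `∑ ℓ, q k i ℓ = 1`, `d` is then
orthogonal to the last rows too, so moving along `d` leaves every attribute count and the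
cardinality unchanged, and a small enough move keeps the fractional coordinates in `[0, 1]`.
Thus `x ± t • d ∈ P` for small `t > 0`, contradicting extremality.
-/

open Filter Topology

theorem eq_zero_of_add_mem_of_sub_mem {𝕜 E : Type*} [Field 𝕜] [LinearOrder 𝕜]
    [IsStrictOrderedRing 𝕜] [AddCommGroup E] [Module 𝕜 E] {A : Set E} {x y : E}
    (hx : x ∈ A.extremePoints 𝕜) (h₁ : x + y ∈ A) (h₂ : x - y ∈ A) : y = 0 := by
  simpa using hx.2 h₁ h₂ (mem_openSegment_add_sub x y)

theorem eq_zero_of_eventually_add_smul_mem {E : Type*} [AddCommGroup E] [Module ℝ E]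
    {A : Set E} {x d : E} (hx : x ∈ A.extremePoints ℝ)
    (h : ∀ᶠ t in 𝓝 (0 : ℝ), x + t • d ∈ A) : d = 0 := by
  have hneg : ∀ᶠ t in 𝓝 (0 : ℝ), x + (-t) • d ∈ A :=
    (continuous_neg.tendsto' 0 0 neg_zero).eventually h
  obtain ⟨t, ⟨h₁, h₂⟩, ht⟩ :=
    ((h.and hneg).filter_mono nhdsWithin_le_nhds).and self_mem_nhdsWithin |>.exists
      (f := 𝓝[≠] (0 : ℝ))
  rw [neg_smul, ← sub_eq_add_neg] at h₂
  exact (smul_eq_zero.mp (eq_zero_of_add_mem_of_sub_mem hx h₁ h₂)).resolve_left ht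

theorem eventually_forall_add_smul_mem_Icc {ι : Type*} [Finite ι] {x d : ι → ℝ}
    (hx : ∀ i, x i ∈ Set.Icc 0 1) (hd : Function.support d ⊆ {i | x i ∈ Set.Ioo 0 1}) :
    ∀ᶠ t in 𝓝 (0 : ℝ), ∀ i, (x + t • d) i ∈ Set.Icc 0 1 := by
  refine eventually_all.2 fun i => ?_
  by_cases hdi : d i = 0
  · simp [hdi, hx i]
  · have hcont : ContinuousAt (fun t : ℝ => x i + t * d i) 0 := by fun_prop
    filter_upwards [hcont.eventually_mem (isOpen_Ioo.mem_nhds (by simpa using hd hdi))]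
      with t ht
    exact ⟨ht.1.le, ht.2.le⟩

theorem exists_ne_zero_support_subset_forall_sum_mul_eq_zero {K ι J : Type*} [Field K]
    [Fintype ι] [Fintype J] (c : J → ι → K) {F : Set ι} (hF : Fintype.card J < F.ncard) :
    ∃ d ≠ 0, Function.support d ⊆ F ∧ ∀ j, ∑ i, c j i * d i = 0 := by
  classical
  let f : (ι → K) →ₗ[K] (J → K) × ((Fᶜ : Set ι) → K) :=
    (Matrix.of c).mulVecLin.prod (LinearMap.funLeft K K Subtype.val)
  have hdim : Module.finrank K ((J → K) × ((Fᶜ : Set ι) → K)) < Module.finrank K (ι → K) := by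
    have hcompl := Set.ncard_add_ncard_compl F
    rw [Set.ncard_eq_toFinset_card' Fᶜ, Nat.card_eq_fintype_card] at hcompl
    simp only [Module.finrank_prod, Module.finrank_fintype_fun_eq_card, ← Set.toFinset_card]
    omega
  obtain ⟨d, hd, hd0⟩ :=
    Submodule.exists_mem_ne_zero_of_ne_bot (LinearMap.ker_ne_bot_of_finrank_lt (f := f) hdim)
  simp only [f, LinearMap.mem_ker, LinearMap.prod_apply, Function.prod, Prod.mk_eq_zero,
    funext_iff] at hd
  refine ⟨d, hd0, fun i hi => ?_, fun j => ?_⟩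
  · by_contra h
    exact hi (hd.2 ⟨i, h⟩)
  · simpa [Matrix.mulVec, dotProduct] using hd.1 j

theorem Fin.eq_zero_of_sum_eq_zero_of_forall_castLE {M : Type*} [AddCommGroup M] {p : ℕ}
    {f : Fin p → M} (hsum : ∑ ℓ, f ℓ = 0)
    (h : ∀ j : Fin (p - 1), f (Fin.castLE (Nat.sub_le p 1) j) = 0) : f = 0 := by
  cases p with
  | zero => exact funext nofun
  | succ n =>
    have hcast : ∀ j : Fin n, f j.castSucc = 0 := h
    rw [Fin.sum_univ_castSucc, Finset.sum_eq_zero fun j _ => hcast j, zero_add] at hsum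
    exact funext (Fin.lastCases hsum hcast)

theorem exists_ne_zero_support_subset_sum_eq_zero_forall_sum_mul_eq_zero {K ι σ : Type*}
    [Field K] [Fintype ι] [Fintype σ] {p : σ → ℕ} (q : ∀ k, ι → Fin (p k) → K)
    (hqsum : ∀ k i, ∑ ℓ, q k i ℓ = 1) {F : Set ι} (hF : 1 + ∑ k, (p k - 1) < F.ncard) :
    ∃ d ≠ 0, Function.support d ⊆ F ∧ ∑ i, d i = 0 ∧
      ∀ k ℓ, ∑ i, q k i ℓ * d i = 0 := by
  -- The last value of each attribute is dropped: by `hqsum` its row is `1` minus the others.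
  let c : Option (Σ k, Fin (p k - 1)) → ι → K :=
    fun j => j.elim 1 fun kj i => q kj.1 i (Fin.castLE (Nat.sub_le _ 1) kj.2)
  have hcard : Fintype.card (Option (Σ k, Fin (p k - 1))) < F.ncard := by
    simpa [add_comm] using hF
  obtain ⟨d, hd0, hdF, hdc⟩ := exists_ne_zero_support_subset_forall_sum_mul_eq_zero c hcard
  have hdsum : ∑ i, d i = 0 := by simpa [c] using hdc none
  refine ⟨d, hd0, hdF, hdsum, fun k => congrFun (Fin.eq_zero_of_sum_eq_zero_of_forall_castLE ?_
    fun j => hdc (some ⟨k, j⟩))⟩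
  rw [Finset.sum_comm]
  simp only [← Finset.sum_mul, hqsum, one_mul, hdsum]

theorem stmt4_general (m n s : ℕ)
    (p : Fin s → ℕ)
    (δ : ℝ)
    (L U : ∀ k : Fin s, Fin (p k) → ℝ)
    (q : ∀ k : Fin s, Fin m → Fin (p k) → ℝ)
    (hqsum : ∀ k i, ∑ ℓ, q k i ℓ = 1)
    (P : Set (Fin m → ℝ))
    (hP : P = {x | (∀ i, 0 ≤ x i ∧ x i ≤ 1) ∧ (∑ i, x i = (n : ℝ)) ∧
      ∀ (k : Fin s) (ℓ : Fin (p k)),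
        L k ℓ - δ * n ≤ ∑ i, q k i ℓ * x i ∧ ∑ i, q k i ℓ * x i ≤ U k ℓ + δ * n})
    (x : Fin m → ℝ) (hx : x ∈ Set.extremePoints ℝ P) :
    {i | 0 < x i ∧ x i < 1}.ncard ≤ min m (1 + ∑ k, (p k - 1)) := by
  refine le_min (by simpa using Set.ncard_le_card {i | 0 < x i ∧ x i < 1}) ?_
  by_contra! hcard
  obtain ⟨d, hd0, hdF, hdsum, hdq⟩ :=
    exists_ne_zero_support_subset_sum_eq_zero_forall_sum_mul_eq_zero q hqsum hcard
  subst hP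
  obtain ⟨hbox, hsum, hattr⟩ := hx.1
  refine hd0 (eq_zero_of_eventually_add_smul_mem hx ?_)
  filter_upwards [eventually_forall_add_smul_mem_Icc hbox hdF] with t ht
  have hq_eq : ∀ k ℓ, ∑ i, q k i ℓ * (x + t • d) i = ∑ i, q k i ℓ * x i := fun k ℓ => by
    simp [mul_add, Finset.sum_add_distrib, mul_left_comm _ t, ← Finset.mul_sum, hdq k ℓ]
  refine ⟨ht, ?_, fun k ℓ => hq_eq k ℓ ▸ hattr k ℓ⟩
  simp [Finset.sum_add_distrib, ← Finset.mul_sum, hdsum, hsum]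

/-- **Extreme points of the denoised LP polytope have at most
`min m (1 + ∑ k (p k − 1))` fractional coordinates (multiple protected attributes).** -/
theorem stmt4 (m n s : ℕ) (hm : 0 < m) (hn : 0 < n) (hs : 0 < s)
    (p : Fin s → ℕ) (hp : ∀ k, 0 < p k)
    (δ : ℝ) (hδ : 0 ≤ δ)
    (L U : ∀ k : Fin s, Fin (p k) → ℝ)
    (q : ∀ k : Fin s, Fin m → Fin (p k) → ℝ)
    (hq : ∀ k i ℓ, q k i ℓ ∈ Set.Icc (0 : ℝ) 1)
    (hqsum : ∀ k i, ∑ ℓ, q k i ℓ = 1)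
    (P : Set (Fin m → ℝ))
    (hP : P = {x | (∀ i, 0 ≤ x i ∧ x i ≤ 1) ∧ (∑ i, x i = (n : ℝ)) ∧
      ∀ (k : Fin s) (ℓ : Fin (p k)),
        L k ℓ - δ * n ≤ ∑ i, q k i ℓ * x i ∧ ∑ i, q k i ℓ * x i ≤ U k ℓ + δ * n})
    (x : Fin m → ℝ) (hx : x ∈ Set.extremePoints ℝ P) :
    {i | 0 < x i ∧ x i < 1}.ncard ≤ min m (1 + ∑ k, (p k - 1)) :=
  stmt4_general m n s p δ L U q hqsum P hP x hx
end

section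
/- Let m, n, p be positive integers, δ ≥ 0, L, U ∈ ℝ^p, q ∈ [0,1]^{m×p}, and w ∈ ℝ^m with w_i ≥ 0 for all i. Suppose x ∈ [0,1]^m satisfies ∑_{i=1}^m x_i = n, satisfies L_ℓ − δn ≤ ∑_{i=1}^m q_{iℓ} x_i ≤ U_ℓ + δn for all ℓ, and has at most p fractional coordinates (#{i : 0 < x_i < 1} ≤ p). Define x' ∈ {0,1}^m by x'_i = ⌈x_i⌉. Then: (1) n ≤ ∑_{i=1}^m x'_i ≤ n + p; (2) for all ℓ ∈ {1,…,p}, L_ℓ − δn ≤ ∑_{i=1}^m q_{iℓ} x'_i ≤ U_ℓ + δn + p; and (3) ∑_{i=1}^m w_i x'_i ≥ ∑_{i=1}^m w_i x_i. -/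
/-- **Correctness of the rounding step.** If `x ∈ [0,1]^m` satisfies the cardinality and
denoised fairness constraints and has at most `p` fractional coordinates, then the
rounded-up vector `x' i = ⌈x i⌉` selects between `n` and `n + p` items, violates each
fairness upper bound by at most `p`, satisfies all fairness lower bounds, and has value
at least that of `x` when the utilities are nonnegative. -/
theorem stmt6 (m n p : ℕ) (hm : 0 < m) (hn : 0 < n) (hp : 0 < p)
    (δ : ℝ) (hδ : 0 ≤ δ) (L U : Fin p → ℝ)
    (q : Fin m → Fin p → ℝ) (hq : ∀ i ℓ, q i ℓ ∈ Set.Icc (0 : ℝ) 1)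
    (w : Fin m → ℝ) (hw : ∀ i, 0 ≤ w i)
    (x : Fin m → ℝ) (hx : ∀ i, x i ∈ Set.Icc (0 : ℝ) 1)
    (hxsum : ∑ i, x i = (n : ℝ))
    (hfair : ∀ ℓ, L ℓ - δ * n ≤ ∑ i, q i ℓ * x i ∧ ∑ i, q i ℓ * x i ≤ U ℓ + δ * n)
    (hfrac : {i | 0 < x i ∧ x i < 1}.ncard ≤ p)
    (x' : Fin m → ℝ) (hx' : ∀ i, x' i = (⌈x i⌉ : ℝ)) :
    ((n : ℝ) ≤ ∑ i, x' i ∧ ∑ i, x' i ≤ (n : ℝ) + p) ∧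
    (∀ ℓ, L ℓ - δ * n ≤ ∑ i, q i ℓ * x' i ∧ ∑ i, q i ℓ * x' i ≤ U ℓ + δ * n + p) ∧
    (∑ i, w i * x i ≤ ∑ i, w i * x' i) := by
  classical
  have hle : ∀ i, x i ≤ x' i := fun i => (hx' i) ▸ Int.le_ceil (x i)
  have hdiff : ∀ i, x' i - x i ≤ (if 0 < x i ∧ x i < 1 then (1 : ℝ) else 0) := by
    intro i
    by_cases h : 0 < x i ∧ x i < 1
    · rw [if_pos h]
      have : (⌈x i⌉ : ℝ) ≤ 1 := by
        exact_mod_cast Int.ceil_le.mpr (by exact_mod_cast (hx i).2)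
      rw [hx' i]; linarith [(hx i).1]
    · simp only [h, if_false]
      rcases (lt_or_eq_of_le (hx i).1).symm with h0 | h0
      · rw [hx' i, ← h0]; simp
      · have h1 : x i = 1 := by
          rcases lt_or_eq_of_le (hx i).2 with h1 | h1
          · exact absurd ⟨h0, h1⟩ h
          · exact h1
        rw [hx' i, h1]; simp
  have hsumdiff : ∑ i, (x' i - x i) ≤ (p : ℝ) := by
    calc ∑ i, (x' i - x i) ≤ ∑ i, (if 0 < x i ∧ x i < 1 then (1 : ℝ) else 0) :=
          Finset.sum_le_sum fun i _ => hdiff i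
      _ = ((Finset.univ.filter fun i => 0 < x i ∧ x i < 1).card : ℝ) := by
          rw [Finset.sum_ite, Finset.sum_const, Finset.sum_const]; simp
      _ ≤ (p : ℝ) := by
          have : {i | 0 < x i ∧ x i < 1}.ncard
              = (Finset.univ.filter fun i => 0 < x i ∧ x i < 1).card := by
            rw [Set.ncard_eq_toFinset_card']; congr 1; ext i; simp
          exact_mod_cast this ▸ hfrac
  have hx'sum : ∑ i, x' i = (n : ℝ) + ∑ i, (x' i - x i) := by
    rw [← hxsum]; rw [Finset.sum_sub_distrib]; ring
  have hsd0 : 0 ≤ ∑ i, (x' i - x i) :=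
    Finset.sum_nonneg fun i _ => sub_nonneg.mpr (hle i)
  refine ⟨⟨by linarith, by linarith⟩, ?_, ?_⟩
  · intro ℓ
    have hqd : ∑ i, (q i ℓ * x' i - q i ℓ * x i) ≤ (p : ℝ) := by
      calc ∑ i, (q i ℓ * x' i - q i ℓ * x i) ≤ ∑ i, (x' i - x i) := by
            apply Finset.sum_le_sum
            intro i _
            have := (hq i ℓ).1
            have := (hq i ℓ).2
            nlinarith [sub_nonneg.mpr (hle i)]
        _ ≤ (p : ℝ) := hsumdiff
    have hq0 : 0 ≤ ∑ i, (q i ℓ * x' i - q i ℓ * x i) :=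
      Finset.sum_nonneg fun i _ => by
        have := (hq i ℓ).1
        nlinarith [sub_nonneg.mpr (hle i)]
    have heq : ∑ i, q i ℓ * x' i = ∑ i, q i ℓ * x i + ∑ i, (q i ℓ * x' i - q i ℓ * x i) := by
      rw [Finset.sum_sub_distrib]; ring
    obtain ⟨hl, hu⟩ := hfair ℓ
    constructor <;> [linarith; linarith]
  · apply Finset.sum_le_sum
    intro i _
    exact mul_le_mul_of_nonneg_left (hle i) (hw i)
end

section
/- Let m, n, p be positive integers, δ ≥ 0, L, U ∈ ℝ^p, w ∈ ℝ^m, and let q ∈ [0,1]^{m×p} satisfy ∑_{ℓ=1}^p q_{iℓ} = 1 for every i. Consider the polytope P := {x ∈ ℝ^m : 0 ≤ x_i ≤ 1 for all i, ∑_{i=1}^m x_i = n, and for all ℓ, L_ℓ − δn ≤ ∑_{i=1}^m q_{iℓ} x_i ≤ U_ℓ + δn}. If P is nonempty, then there exists x ∈ P such that ∑_{i=1}^m w_i x_i ≥ ∑_{i=1}^m w_i y_i for every y ∈ P, and x has at most min(m, p) fractional coordinates (#{i : 0 < x_i < 1} ≤ min(m, p)). -/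
/-!
Among the maximizers of `w ⬝ᵥ x` over the compact polytope, take one with the fewest fractional
coordinates `S`. If `p < |S|`, the rows `q i`, `i ∈ S`, are linearly dependent in `ℝ^p`, giving a
nonzero direction `d` supported on `S` with `d ᵥ* q = 0`; since the rows of `q` sum to `1`, also
`∑ d = 0`, so moving along `±d` (the sign chosen so that `w ⬝ᵥ d ≥ 0`) keeps all constraints except
the box. Moving until the first coordinate hits `0` or `1` gives a maximizer with fewer fractional
coordinates.
-/

open Matrix Finset

theorem Matrix.exists_ne_zero_vecMul_eq_zero_of_card_lt {ι κ K : Type*} [Fintype ι] [Fintype κ]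
    [Field K] (q : Matrix ι κ K) (S : Finset ι) (h : Fintype.card κ < S.card) : ∃ d : ι → K, d ᵥ* q = 0 ∧ d ≠ 0 ∧ ∀ i ∉ S, d i = 0 := by
  have hdep : ¬LinearIndependent K (fun i : S => q i) := fun hli =>
    (hli.fintype_card_le_finrank.trans_lt (by simpa using h)).false
  obtain ⟨g, hg, i, hi⟩ := Fintype.not_linearIndependent_iff.mp hdep
  have hzero : ∀ j ∉ S, Subtype.val.extend g 0 j = 0 := fun j hj =>
    Function.extend_apply' _ _ _ fun ⟨a, ha⟩ => hj (ha ▸ a.2)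
  refine ⟨Subtype.val.extend g 0, ?_, fun h0 => hi ?_, hzero⟩
  · rw [vecMul_eq_sum, ← hg, ← sum_subset (subset_univ S) fun j _ hj => by simp [hzero j hj],
      ← sum_coe_sort]
    simp
  · simpa [Subtype.val_injective.extend_apply] using congrFun h0 i

/-- The first time `t ≥ 0` at which `a + t * c` reaches `0` or `1` (for `a ∈ [0, 1]`);
junk value `0` when `c = 0`. -/
noncomputable def boundaryTime (a c : ℝ) : ℝ := if 0 < c then (1 - a) / c else -a / c

lemma boundaryTime_nonneg {a : ℝ} (ha : a ∈ Set.Icc 0 1) (c : ℝ) : 0 ≤ boundaryTime a c := by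
  obtain ⟨h0, h1⟩ := ha
  unfold boundaryTime
  split_ifs with hc
  · exact div_nonneg (by linarith) hc.le
  · exact div_nonneg_of_nonpos (by linarith) (not_lt.mp hc)

lemma add_mul_mem_Icc_of_le_boundaryTime {a c t : ℝ} (ha : a ∈ Set.Icc 0 1) (ht₀ : 0 ≤ t)
    (ht : t ≤ boundaryTime a c) : a + t * c ∈ Set.Icc 0 1 := by
  obtain ⟨h0, h1⟩ := ha
  unfold boundaryTime at ht
  rcases lt_trichotomy c 0 with hc | rfl | hc
  · rw [if_neg hc.not_gt, le_div_iff_of_neg hc] at ht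
    constructor <;> nlinarith
  · simpa using And.intro h0 h1
  · rw [if_pos hc, le_div_iff₀ hc] at ht
    constructor <;> nlinarith

lemma add_boundaryTime_mul_notMem_Ioo (a : ℝ) {c : ℝ} (hc : c ≠ 0) :
    a + boundaryTime a c * c ∉ Set.Ioo 0 1 := by
  unfold boundaryTime
  split_ifs <;> simp [div_mul_cancel₀ _ hc]

lemma Pi.mem_Icc_iff_forall {ι : Type*} {α : ι → Type*} [∀ i, Preorder (α i)] {a b x : ∀ i, α i} :
    x ∈ Set.Icc a b ↔ ∀ i, x i ∈ Set.Icc (a i) (b i) := by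
  rw [← Set.pi_univ_Icc, Set.mem_univ_pi]

section FractionalCoords

variable {ι : Type*} [Fintype ι]

noncomputable def fractionalCoords (x : ι → ℝ) : Finset ι :=
  {i | x i ∈ Set.Ioo 0 1}

lemma exists_add_smul_mem_Icc_card_fractionalCoords_lt {x d : ι → ℝ} (hx : x ∈ Set.Icc 0 1)
    (hd : d ≠ 0) (hsupp : ∀ i ∉ fractionalCoords x, d i = 0) :
    ∃ t : ℝ, 0 ≤ t ∧ x + t • d ∈ Set.Icc 0 1 ∧
      (fractionalCoords (x + t • d)).card < (fractionalCoords x).card := by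
  classical
  rw [Pi.mem_Icc_iff_forall] at hx
  have hS : ({i | d i ≠ 0} : Finset ι).Nonempty := by
    obtain ⟨i, hi⟩ := Function.ne_iff.mp hd
    exact ⟨i, by simpa using hi⟩
  obtain ⟨i₀, hi₀, ht⟩ := exists_mem_eq_inf' hS fun i => boundaryTime (x i) (d i)
  set t := ({i | d i ≠ 0} : Finset ι).inf' hS fun i => boundaryTime (x i) (d i)
  have hdi₀ : d i₀ ≠ 0 := by simpa using hi₀
  have ht₀ : 0 ≤ t := ht ▸ boundaryTime_nonneg (hx i₀) _
  have hfrac_of_ne : ∀ i, d i ≠ 0 → i ∈ fractionalCoords x := fun i => not_imp_comm.mp (hsupp i)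
  refine ⟨t, ht₀, Pi.mem_Icc_iff_forall.mpr fun i => ?_, ?_⟩
  · by_cases hdi : d i = 0
    · simpa [hdi] using hx i
    · exact add_mul_mem_Icc_of_le_boundaryTime (hx i) ht₀ (inf'_le _ (by simpa using hdi))
  · refine card_lt_card ⟨fun i hi => ?_, fun hsub => ?_⟩
    · by_cases hdi : d i = 0
      · simpa [fractionalCoords, hdi] using hi
      · exact hfrac_of_ne i hdi
    · have := hsub (hfrac_of_ne i₀ hdi₀)
      simp only [fractionalCoords, mem_filter, mem_univ, true_and, Pi.add_apply, Pi.smul_apply,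
        smul_eq_mul, ht] at this
      exact add_boundaryTime_mul_notMem_Ioo _ hdi₀ this

theorem exists_le_dotProduct_card_fractionalCoords_le {P : Set (ι → ℝ)}
    {K : Submodule ℝ (ι → ℝ)} {r : ℕ} (hP : P ⊆ Set.Icc 0 1)
    (hK : ∀ x ∈ P, ∀ d ∈ K, x + d ∈ Set.Icc 0 1 → x + d ∈ P)
    (hdim : ∀ S : Finset ι, r < S.card → ∃ d ∈ K, d ≠ 0 ∧ ∀ i ∉ S, d i = 0)
    (w : ι → ℝ) {x : ι → ℝ} (hx : x ∈ P) :
    ∃ y ∈ P, w ⬝ᵥ x ≤ w ⬝ᵥ y ∧ (fractionalCoords y).card ≤ r := by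
  induction hk : (fractionalCoords x).card using Nat.strong_induction_on generalizing x with
  | _ k ih =>
  by_cases hkr : k ≤ r
  · exact ⟨x, hx, le_rfl, hk ▸ hkr⟩
  obtain ⟨d, hdK, hd0, hsupp⟩ := hdim _ (hk ▸ not_le.mp hkr)
  obtain ⟨e, heK, he0, hesupp, hwe⟩ : ∃ e ∈ K, e ≠ 0 ∧ (∀ i ∉ fractionalCoords x, e i = 0) ∧
      0 ≤ w ⬝ᵥ e := by
    rcases le_total 0 (w ⬝ᵥ d) with hwd | hwd
    · exact ⟨d, hdK, hd0, hsupp, hwd⟩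
    · refine ⟨-d, K.neg_mem hdK, neg_ne_zero.mpr hd0, fun i hi => by simp [hsupp i hi], ?_⟩
      rwa [dotProduct_neg, neg_nonneg]
  obtain ⟨t, ht₀, hbox, hlt⟩ :=
    exists_add_smul_mem_Icc_card_fractionalCoords_lt (hP hx) he0 hesupp
  obtain ⟨y, hy, hle, hcard⟩ :=
    ih _ (hk ▸ hlt) (hK x hx _ (K.smul_mem t heK) hbox) rfl
  refine ⟨y, hy, le_trans ?_ hle, hcard⟩
  rw [dotProduct_add, dotProduct_smul, smul_eq_mul, le_add_iff_nonneg_right]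
  exact mul_nonneg ht₀ hwe

end FractionalCoords

section DenoisedPolytope

variable {ι κ : Type*} [Fintype ι]

def denoisedPolytope (n : ℕ) (δ : ℝ) (L U : κ → ℝ) (q : Matrix ι κ ℝ) : Set (ι → ℝ) :=
  {x | (∀ i, 0 ≤ x i ∧ x i ≤ 1) ∧ (∑ i, x i = (n : ℝ)) ∧
    ∀ ℓ, L ℓ - δ * n ≤ ∑ i, q i ℓ * x i ∧ ∑ i, q i ℓ * x i ≤ U ℓ + δ * n}

variable {n : ℕ} {δ : ℝ} {L U : κ → ℝ} {q : Matrix ι κ ℝ}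

lemma denoisedPolytope_subset_Icc : denoisedPolytope n δ L U q ⊆ Set.Icc 0 1 :=
  fun _ hx => Pi.mem_Icc_iff_forall.mpr hx.1

lemma isClosed_denoisedPolytope : IsClosed (denoisedPolytope n δ L U q) := by
  simp only [denoisedPolytope, Set.ofPred_and, Set.ofPred_forall]
  refine .inter (isClosed_iInter fun i => .inter ?_ ?_)
    (.inter ?_ (isClosed_iInter fun ℓ => .inter ?_ ?_))
  all_goals first
    | exact isClosed_le (by fun_prop) (by fun_prop)
    | exact isClosed_eq (by fun_prop) (by fun_prop)

lemma isCompact_denoisedPolytope : IsCompact (denoisedPolytope n δ L U q) :=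
  isCompact_Icc.of_isClosed_subset isClosed_denoisedPolytope denoisedPolytope_subset_Icc

lemma sum_eq_zero_of_vecMul_eq_zero [Fintype κ] (hq : ∀ i, ∑ ℓ, q i ℓ = 1) {d : ι → ℝ}
    (hd : d ᵥ* q = 0) : ∑ i, d i = 0 := by
  have hq1 : q *ᵥ 1 = 1 := funext fun i => by simpa [mulVec, dotProduct] using hq i
  calc ∑ i, d i = d ⬝ᵥ q *ᵥ 1 := by simp [hq1, dotProduct]
    _ = 0 := by rw [dotProduct_mulVec, hd, zero_dotProduct]

lemma add_mem_denoisedPolytope [Fintype κ] (hq : ∀ i, ∑ ℓ, q i ℓ = 1) {x d : ι → ℝ}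
    (hx : x ∈ denoisedPolytope n δ L U q) (hd : d ᵥ* q = 0) (hbox : x + d ∈ Set.Icc 0 1) :
    x + d ∈ denoisedPolytope n δ L U q := by
  have hconstr : ∀ ℓ, ∑ i, q i ℓ * (x + d) i = ∑ i, q i ℓ * x i := fun ℓ => by
    have := congrFun hd ℓ
    simp only [vecMul, dotProduct, Pi.zero_apply] at this
    simp only [Pi.add_apply, mul_add, sum_add_distrib, add_eq_left]
    simpa only [mul_comm] using this
  refine ⟨Pi.mem_Icc_iff_forall.mp hbox, ?_, fun ℓ => hconstr ℓ ▸ hx.2.2 ℓ⟩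
  simp [sum_add_distrib, hx.2.1, sum_eq_zero_of_vecMul_eq_zero hq hd]

end DenoisedPolytope

theorem stmt7_general (m n p : ℕ)
    (δ : ℝ) (L U : Fin p → ℝ) (w : Fin m → ℝ)
    (q : Fin m → Fin p → ℝ)
    (hqsum : ∀ i, ∑ ℓ, q i ℓ = 1)
    (P : Set (Fin m → ℝ))
    (hP : P = {x | (∀ i, 0 ≤ x i ∧ x i ≤ 1) ∧ (∑ i, x i = (n : ℝ)) ∧
      ∀ ℓ, L ℓ - δ * n ≤ ∑ i, q i ℓ * x i ∧ ∑ i, q i ℓ * x i ≤ U ℓ + δ * n})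
    (hPne : P.Nonempty) :
    ∃ x ∈ P, (∀ y ∈ P, ∑ i, w i * y i ≤ ∑ i, w i * x i) ∧
      {i | 0 < x i ∧ x i < 1}.ncard ≤ min m p := by
  replace hP : P = denoisedPolytope n δ L U q := hP
  subst hP
  obtain ⟨x₀, hx₀, hmax⟩ := isCompact_denoisedPolytope.exists_isMaxOn hPne
    (by fun_prop : Continuous fun x : Fin m → ℝ => ∑ i, w i * x i).continuousOn
  obtain ⟨x, hx, hle, hcard⟩ := exists_le_dotProduct_card_fractionalCoords_le
    (K := LinearMap.ker (vecMulLinear q)) denoisedPolytope_subset_Icc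
    (fun x hx d hd => add_mem_denoisedPolytope hqsum hx hd)
    (fun S hS => exists_ne_zero_vecMul_eq_zero_of_card_lt q S (by simpa using hS))
    w hx₀
  refine ⟨x, hx, fun y hy => (hmax hy).trans hle, ?_⟩
  have hfrac : {i | 0 < x i ∧ x i < 1} = (fractionalCoords x : Set (Fin m)) := by
    ext; simp [fractionalCoords]
  rw [hfrac, Set.ncard_coe_finset]
  exact le_min ((card_le_univ _).trans (Fintype.card_fin m).le) hcard

/-- **Existence of a basic feasible optimal solution (one protected attribute).** If the
denoised LP polytope is nonempty, there is a maximizer of the linear objective `wᵀx`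
over it with at most `min m p` fractional coordinates. -/
theorem stmt7 (m n p : ℕ) (hm : 0 < m) (hn : 0 < n) (hp : 0 < p)
    (δ : ℝ) (hδ : 0 ≤ δ) (L U : Fin p → ℝ) (w : Fin m → ℝ)
    (q : Fin m → Fin p → ℝ) (hq : ∀ i ℓ, q i ℓ ∈ Set.Icc (0 : ℝ) 1)
    (hqsum : ∀ i, ∑ ℓ, q i ℓ = 1)
    (P : Set (Fin m → ℝ))
    (hP : P = {x | (∀ i, 0 ≤ x i ∧ x i ≤ 1) ∧ (∑ i, x i = (n : ℝ)) ∧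
      ∀ ℓ, L ℓ - δ * n ≤ ∑ i, q i ℓ * x i ∧ ∑ i, q i ℓ * x i ≤ U ℓ + δ * n})
    (hPne : P.Nonempty) :
    ∃ x ∈ P, (∀ y ∈ P, ∑ i, w i * y i ≤ ∑ i, w i * x i) ∧
      {i | 0 < x i ∧ x i < 1}.ncard ≤ min m p :=
  stmt7_general m n p δ L U w q hqsum P hP hPne
end

section
/- Fix positive integers m, n, s and p_1,…,p_s, a real δ ∈ (0,1), a utility vector w ∈ ℝ^m with w_i ≥ 0, and for each k ∈ {1,…,s} vectors L^{(k)}, U^{(k)} ∈ ℝ^{p_k} with nonnegative entries and a matrix q^{(k)} ∈ [0,1]^{m×p_k} whose rows sum to 1. Let (g^{(1)},…,g^{(s)}) be random assignments with all m·s labels g^{(k)}(i) mutually independent and Pr[g^{(k)}(i) = ℓ] = q^{(k)}_{iℓ}, and set p̄ := max_k p_k and r := 1 + ∑_{k=1}^s (p_k − 1). Let P := {x ∈ [0,1]^m : ∑_i x_i = n, and for all k, ℓ, L^{(k)}_ℓ − δn ≤ ∑_i q^{(k)}_{iℓ} x_i ≤ U^{(k)}_ℓ + δn}, suppose x ∈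 P maximizes y ↦ ∑_i w_i y_i over P and has at most r fractional coordinates, and set x'_i := ⌈x_i⌉ ∈ {0,1}. Then n ≤ ∑_i x'_i ≤ n + r, and for every fixed x* ∈ {0,1}^m with ∑_i x*_i = n, with probability at least 1 − 4·p̄·s·exp(−δ²n/3), the following both hold: (i) if for all k and all ℓ ∈ {1,…,p_k}, L^{(k)}_ℓ ≤ #{i : x*_i = 1 and g^{(k)}(i) = ℓ} ≤ U^{(k)}_ℓ, then ∑_i w_i x'_i ≥ ∑_i w_i x*_i; and (ii) for all k and all ℓ ∈ {1,…,p_k}, L^{(k)}_ℓ − (r + 2δn) ≤ #{i : x'_i = 1 and g^{(k)}(i) = ℓ} ≤ U^{(k)}_ℓ + (r + 2δn). -/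
/-!
Rounding up the optimal point `x` of the denoised LP changes only its at most `r` fractional
coordinates, each by less than `1`, so every linear form with coefficients in `[0, 1]` grows by at
most `r`. For a fixed weight vector `v ∈ [0, 1]^m` with `∑ v = n`, the weighted count
`∑ i, v i [g k i = ℓ]` is a sum of independent bounded variables, so by Hoeffding's inequality it is
within `δ n` of its mean `∑ i, q k i ℓ * v i` except with probability `2 exp (-2 δ² n)`. A union
bound over `k`, `ℓ` and the two vectors `x*` and `x` gives the event. On it, a fair `x*` lies in the
denoised polytope, so `w ⬝ x* ≤ w ⬝ x ≤ w ⬝ x'`; and the group counts of `x'` are within `r` of the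
weighted counts of `x`, which are within `δ n` of `∑ q x ∈ [L - δ n, U + δ n]`.
-/

open MeasureTheory ProbabilityTheory Real
open scoped NNReal

lemma ProbabilityTheory.HasSubgaussianMGF.mono {Ω : Type*} [MeasurableSpace Ω] {μ : Measure Ω}
    {X : Ω → ℝ} {c d : ℝ≥0} (h : HasSubgaussianMGF X c μ) (hcd : c ≤ d) :
    HasSubgaussianMGF X d μ where
  integrable_exp_mul := h.integrable_exp_mul
  mgf_le t := (h.mgf_le t).trans (exp_le_exp.2 (by gcongr))

section Hoeffding

variable {ι : Type*} [Fintype ι] {Ω : ι → Type*} [∀ i, MeasurableSpace (Ω i)]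
  {μ : ∀ i, Measure (Ω i)} [∀ i, IsProbabilityMeasure (μ i)]

lemma measureReal_pi_sum_ge_le {X : ∀ i, Ω i → ℝ} (hX : ∀ i, Measurable (X i)) {c : ι → ℝ≥0}
    (hXc : ∀ i, HasSubgaussianMGF (X i) (c i) (μ i)) {ε : ℝ} (hε : 0 ≤ ε) :
    (Measure.pi μ).real {ω | ε ≤ ∑ i, X i (ω i)} ≤ exp (-ε ^ 2 / (2 * ∑ i, c i)) := by
  refine HasSubgaussianMGF.measure_sum_ge_le_of_iIndepFun
    (iIndepFun_pi fun i ↦ (hX i).aemeasurable) (fun i _ ↦ ?_) hε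
  refine HasSubgaussianMGF.of_map (Y := Function.eval i) (measurable_pi_apply i).aemeasurable ?_
  rw [(measurePreserving_eval μ i).map_eq]
  exact hXc i

end Hoeffding

section Rounding

variable {ι : Type*} [Fintype ι] {x : ι → ℝ}

lemma ceil_eq_zero_or_one_of_mem_Icc {t : ℝ} (ht : t ∈ Set.Icc (0 : ℝ) 1) :
    (⌈t⌉ : ℝ) = 0 ∨ (⌈t⌉ : ℝ) = 1 := by
  rcases ht.1.eq_or_lt with h | h
  · simp [← h]
  · have : ⌈t⌉ = 1 := Int.ceil_eq_iff.2 ⟨by norm_num [h], by norm_num [ht.2]⟩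
    simp [this]

lemma ceil_sub_self_le_ite {t : ℝ} (ht : t ∈ Set.Icc (0 : ℝ) 1) :
    (⌈t⌉ : ℝ) - t ≤ if 0 < t ∧ t < 1 then 1 else 0 := by
  split_ifs with h
  · linarith [Int.ceil_lt_add_one t]
  · have : t = 0 ∨ t = 1 := by
      rcases ht.1.eq_or_lt with h0 | h0
      · exact Or.inl h0.symm
      · exact Or.inr (ht.2.antisymm (not_lt.1 fun h1 ↦ h ⟨h0, h1⟩))
    rcases this with rfl | rfl <;> simp

lemma sum_mul_ceil_sub_le (hx : ∀ i, x i ∈ Set.Icc (0 : ℝ) 1) {c : ι → ℝ}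
    (hc : ∀ i, c i ∈ Set.Icc (0 : ℝ) 1) :
    ∑ i, c i * (⌈x i⌉ - x i) ≤ ({i | 0 < x i ∧ x i < 1} : Set ι).ncard := by
  classical
  calc _ ≤ ∑ i, if 0 < x i ∧ x i < 1 then (1 : ℝ) else 0 :=
        Finset.sum_le_sum fun i _ ↦ (mul_le_of_le_one_left
          (sub_nonneg.2 (Int.le_ceil _)) (hc i).2).trans (ceil_sub_self_le_ite (hx i))
    _ = _ := by
        rw [Finset.sum_boole, Set.ncard_eq_toFinset_card']
        simp

lemma sum_le_sum_ceil_and_sum_ceil_le (hx : ∀ i, x i ∈ Set.Icc (0 : ℝ) 1) :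
    ∑ i, x i ≤ ∑ i, (⌈x i⌉ : ℝ) ∧
      ∑ i, (⌈x i⌉ : ℝ) ≤ ∑ i, x i + ({i | 0 < x i ∧ x i < 1} : Set ι).ncard := by
  have h := sum_mul_ceil_sub_le hx (c := 1) fun _ ↦ ⟨zero_le_one, le_rfl⟩
  simp only [Pi.one_apply, one_mul, Finset.sum_sub_distrib] at h
  exact ⟨Finset.sum_le_sum fun i _ ↦ Int.le_ceil _, by linarith⟩

end Rounding

section LabelCount

variable {ι α : Type*} [Fintype ι] [DecidableEq α] {x : ι → ℝ}

def labelCount (v : ι → ℝ) (y : ι → α) (a : α) : ℝ :=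
  ∑ i, v i * if y i = a then 1 else 0

lemma labelCount_eq_ncard {v : ι → ℝ} (hv : ∀ i, v i = 0 ∨ v i = 1) (y : ι → α) (a : α) :
    labelCount v y a = ({i | v i = 1 ∧ y i = a} : Set ι).ncard := by
  classical
  have h : ∀ i, v i * (if y i = a then 1 else 0) = if v i = 1 ∧ y i = a then (1 : ℝ) else 0 := by
    intro i
    rcases hv i with h | h <;> simp [h]
  rw [labelCount, Finset.sum_congr rfl fun i _ ↦ h i, Finset.sum_boole, Set.ncard_eq_toFinset_card']
  simp

lemma labelCount_le_labelCount_ceil (y : ι → α) (a : α) :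
    labelCount x y a ≤ labelCount (fun i ↦ (⌈x i⌉ : ℝ)) y a :=
  Finset.sum_le_sum fun i _ ↦
    mul_le_mul_of_nonneg_right (Int.le_ceil _) (by split_ifs <;> norm_num)

lemma labelCount_ceil_le (hx : ∀ i, x i ∈ Set.Icc (0 : ℝ) 1) (y : ι → α) (a : α) :
    labelCount (fun i ↦ (⌈x i⌉ : ℝ)) y a ≤
      labelCount x y a + ({i | 0 < x i ∧ x i < 1} : Set ι).ncard := by
  have h := sum_mul_ceil_sub_le hx (c := fun i ↦ if y i = a then 1 else 0)
    (fun i ↦ by split_ifs <;> norm_num)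
  rw [← sub_le_iff_le_add', labelCount, labelCount, ← Finset.sum_sub_distrib]
  convert h using 2 with i
  ring

lemma ncard_ceil_label_bounds (hx : ∀ i, x i ∈ Set.Icc (0 : ℝ) 1) {r : ℕ}
    (hfrac : ({i | 0 < x i ∧ x i < 1} : Set ι).ncard ≤ r) (y : ι → α) (a : α)
    {Q L U ε : ℝ} (hdev : |labelCount x y a - Q| ≤ ε) (hQ : L - ε ≤ Q ∧ Q ≤ U + ε) :
    L - (r + 2 * ε) ≤ ({i | (⌈x i⌉ : ℝ) = 1 ∧ y i = a} : Set ι).ncard ∧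
      (({i | (⌈x i⌉ : ℝ) = 1 ∧ y i = a} : Set ι).ncard : ℝ) ≤ U + (r + 2 * ε) := by
  rw [← labelCount_eq_ncard (fun i ↦ ceil_eq_zero_or_one_of_mem_Icc (hx i))]
  have hlow := labelCount_le_labelCount_ceil (x := x) y a
  have hup := labelCount_ceil_le hx y a
  have hr : (({i | 0 < x i ∧ x i < 1} : Set ι).ncard : ℝ) ≤ r := by exact_mod_cast hfrac
  obtain ⟨hdev₁, hdev₂⟩ := abs_le.1 hdev
  constructor <;> linarith [hQ.1, hQ.2]

variable [MeasurableSpace α] [MeasurableSingletonClass α]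

lemma hasSubgaussianMGF_mul_indicator_sub (ν : Measure α) [IsProbabilityMeasure ν] (a : α)
    {v : ℝ} (hv : v ∈ Set.Icc (0 : ℝ) 1) :
    HasSubgaussianMGF (fun b ↦ v * ((if b = a then 1 else 0) - ν.real {a}))
      (v / 4).toNNReal ν := by
  have hmeas : Measurable (Set.indicator {a} (1 : α → ℝ)) :=
    measurable_one.indicator (measurableSet_singleton a)
  have h := (hasSubgaussianMGF_of_mem_Icc (μ := ν) (a := 0) (b := 1) hmeas.aemeasurable
    (ae_of_all _ fun b ↦ ⟨Set.indicator_nonneg (fun _ _ ↦ zero_le_one) b,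
      Set.indicator_le_self' (fun _ _ ↦ zero_le_one) b⟩)).const_mul v
  rw [integral_indicator_one (measurableSet_singleton a)] at h
  simp only [Set.indicator_apply, Set.mem_singleton_iff, Pi.one_apply] at h
  refine h.mono ((Real.le_toNNReal_iff_coe_le (by linarith [hv.1])).2 ?_)
  change v ^ 2 * (((‖(1 : ℝ) - 0‖₊ / 2) ^ 2 : ℝ≥0) : ℝ) ≤ v / 4
  norm_num
  nlinarith [hv.1, hv.2]

variable {ν : ι → Measure α} [∀ i, IsProbabilityMeasure (ν i)] {v : ι → ℝ}

lemma coe_sum_toNNReal_div_four (hv : ∀ i, v i ∈ Set.Icc (0 : ℝ) 1) :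
    ((∑ i, (v i / 4).toNNReal : ℝ≥0) : ℝ) = (∑ i, v i) / 4 := by
  rw [NNReal.coe_sum, Finset.sum_div]
  exact Finset.sum_congr rfl fun i _ ↦ Real.coe_toNNReal _ (by linarith [(hv i).1])

lemma measureReal_labelCount_sub_ge_le (hv : ∀ i, v i ∈ Set.Icc (0 : ℝ) 1) (a : α) {ε : ℝ}
    (hε : 0 ≤ ε) :
    (Measure.pi ν).real {y | ε ≤ labelCount v y a - ∑ i, (ν i).real {a} * v i} ≤
      exp (-2 * ε ^ 2 / ∑ i, v i) := by
  have h := measureReal_pi_sum_ge_le (μ := ν)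
    (X := fun i b ↦ v i * ((if b = a then 1 else 0) - (ν i).real {a}))
    (fun i ↦ ((Measurable.ite (measurableSet_singleton a) measurable_const
      measurable_const).sub_const _).const_mul _)
    (fun i ↦ hasSubgaussianMGF_mul_indicator_sub (ν i) a (hv i)) hε
  rw [coe_sum_toNNReal_div_four hv] at h
  calc _ = (Measure.pi ν).real
          {y | ε ≤ ∑ i, v i * ((if y i = a then 1 else 0) - (ν i).real {a})} := by
        simp only [labelCount, mul_sub, Finset.sum_sub_distrib, mul_comm ((ν _).real _)]
    _ ≤ _ := h
    _ = _ := by ring_nf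

lemma measureReal_sub_labelCount_ge_le (hv : ∀ i, v i ∈ Set.Icc (0 : ℝ) 1) (a : α) {ε : ℝ}
    (hε : 0 ≤ ε) :
    (Measure.pi ν).real {y | ε ≤ ∑ i, (ν i).real {a} * v i - labelCount v y a} ≤
      exp (-2 * ε ^ 2 / ∑ i, v i) := by
  have h := measureReal_pi_sum_ge_le (μ := ν)
    (X := fun i b ↦ -(v i * ((if b = a then 1 else 0) - (ν i).real {a})))
    (fun i ↦ (((Measurable.ite (measurableSet_singleton a) measurable_const
      measurable_const).sub_const _).const_mul _).neg)
    (fun i ↦ (hasSubgaussianMGF_mul_indicator_sub (ν i) a (hv i)).neg) hε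
  rw [coe_sum_toNNReal_div_four hv] at h
  calc _ = (Measure.pi ν).real
          {y | ε ≤ ∑ i, -(v i * ((if y i = a then 1 else 0) - (ν i).real {a}))} := by
        simp only [labelCount, mul_sub, neg_sub, Finset.sum_sub_distrib,
          mul_comm ((ν _).real _)]
    _ ≤ _ := h
    _ = _ := by ring_nf

lemma measureReal_abs_labelCount_sub_ge_le (hv : ∀ i, v i ∈ Set.Icc (0 : ℝ) 1) (a : α)
    {ε : ℝ} (hε : 0 ≤ ε) :
    (Measure.pi ν).real {y | ε ≤ |labelCount v y a - ∑ i, (ν i).real {a} * v i|} ≤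
      2 * exp (-2 * ε ^ 2 / ∑ i, v i) := by
  calc _ ≤ (Measure.pi ν).real ({y | ε ≤ labelCount v y a - ∑ i, (ν i).real {a} * v i} ∪
        {y | ε ≤ ∑ i, (ν i).real {a} * v i - labelCount v y a}) := by
        refine measureReal_mono (fun y hy ↦ ?_)
        rcases le_abs'.1 (show ε ≤ |_| from hy) with h | h
        · exact Or.inr (show ε ≤ _ by linarith)
        · exact Or.inl h
    _ ≤ _ := measureReal_union_le _ _
    _ ≤ _ := by
        rw [two_mul]
        exact add_le_add (measureReal_labelCount_sub_ge_le hv a hε)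
          (measureReal_sub_labelCount_ge_le hv a hε)

end LabelCount

lemma measureReal_iUnion_iUnion_le {Ω κ : Type*} [MeasurableSpace Ω] [Fintype κ]
    (μ : Measure Ω) (p : κ → ℕ) (E : ∀ k, Fin (p k) → Set Ω) {b : ℝ} (hb : 0 ≤ b)
    (hE : ∀ k ℓ, μ.real (E k ℓ) ≤ b) :
    μ.real (⋃ k, ⋃ ℓ, E k ℓ) ≤ Finset.univ.sup p * Fintype.card κ * b :=
  calc _ ≤ ∑ k, μ.real (⋃ ℓ, E k ℓ) := measureReal_iUnion_fintype_le _
    _ ≤ ∑ k, ∑ ℓ, μ.real (E k ℓ) :=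
        Finset.sum_le_sum fun k _ ↦ measureReal_iUnion_fintype_le _
    _ ≤ ∑ k, ∑ _ℓ : Fin (p k), b :=
        Finset.sum_le_sum fun k _ ↦ Finset.sum_le_sum fun ℓ _ ↦ hE k ℓ
    _ ≤ ∑ _k : κ, Finset.univ.sup p * b := by
        refine Finset.sum_le_sum fun k _ ↦ ?_
        rw [Finset.sum_const, Finset.card_univ, Fintype.card_fin, nsmul_eq_mul]
        gcongr
        exact_mod_cast Finset.le_sup (Finset.mem_univ k)
    _ = _ := by
        rw [Finset.sum_const, Finset.card_univ, nsmul_eq_mul]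
        ring

lemma exp_neg_two_mul_sq_div_le (δ : ℝ) (n : ℕ) :
    exp (-2 * (δ * n) ^ 2 / n) ≤ exp (-(δ ^ 2 * n) / 3) := by
  have h : (δ * n) ^ 2 / n = δ ^ 2 * n := by
    rw [mul_pow, mul_div_assoc, sq (n : ℝ), mul_self_div_self]
  rw [exp_le_exp, mul_div_assoc, h]
  nlinarith [sq_nonneg δ, n.cast_nonneg (α := ℝ)]

def labelDeviationEvent {κ ι : Type*} [Fintype ι] {p : κ → ℕ}
    (ν : ∀ k, ι → Measure (Fin (p k))) (v : ι → ℝ) (ε : ℝ) : Set (∀ k, ι → Fin (p k)) :=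
  {g | ∃ k ℓ, ε ≤ |labelCount v (g k) ℓ - ∑ i, (ν k i).real {ℓ} * v i|}

lemma measureReal_labelDeviationEvent_le {κ ι : Type*} [Fintype κ] [Fintype ι] {p : κ → ℕ}
    (ν : ∀ k, ι → Measure (Fin (p k))) [∀ k i, IsProbabilityMeasure (ν k i)]
    {v : ι → ℝ} (hv : ∀ i, v i ∈ Set.Icc (0 : ℝ) 1) {n : ℕ} (hsum : ∑ i, v i = n)
    {δ : ℝ} (hδ : 0 ≤ δ) :
    (Measure.pi fun k ↦ Measure.pi fun i ↦ ν k i).real (labelDeviationEvent ν v (δ * n)) ≤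
      Finset.univ.sup p * Fintype.card κ * (2 * exp (-(δ ^ 2 * n) / 3)) := by
  have hset : labelDeviationEvent ν v (δ * n) = ⋃ k, ⋃ ℓ, Function.eval k ⁻¹'
      {y | δ * n ≤ |labelCount v y ℓ - ∑ i, (ν k i).real {ℓ} * v i|} := by
    ext g
    simp [labelDeviationEvent]
  rw [hset]
  refine measureReal_iUnion_iUnion_le _ p _ (by positivity) fun k ℓ ↦ ?_
  rw [(measurePreserving_eval _ k).measureReal_preimage
    MeasurableSet.of_discrete.nullMeasurableSet]
  refine (measureReal_abs_labelCount_sub_ge_le hv ℓ (by positivity)).trans ?_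
  rw [hsum]
  gcongr 2 * ?_
  exact exp_neg_two_mul_sq_div_le δ n

lemma ofReal_one_sub_le_measure {Ω : Type*} [MeasurableSpace Ω] (μ : Measure Ω)
    [IsProbabilityMeasure μ] {B T : Set Ω} {β : ℝ} (hB : μ.real B ≤ β) (hBT : Bᶜ ⊆ T) :
    ENNReal.ofReal (1 - β) ≤ μ T := by
  have h : 1 ≤ μ.real B + μ.real Bᶜ := by
    simpa [Set.union_compl_self] using measureReal_union_le (μ := μ) B Bᶜ
  rw [← ofReal_measureReal (measure_ne_top μ T)]
  exact ENNReal.ofReal_le_ofReal (by linarith [measureReal_mono (μ := μ) hBT])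

theorem stmt10_general (m n s : ℕ)
    (p : Fin s → ℕ)
    (δ : ℝ) (hδ : δ ∈ Set.Ioo (0 : ℝ) 1)
    (w : Fin m → ℝ) (hw : ∀ i, 0 ≤ w i)
    (L U : ∀ k : Fin s, Fin (p k) → ℝ)
    (q : ∀ k : Fin s, Fin m → Fin (p k) → ℝ)
    (hq : ∀ k i ℓ, q k i ℓ ∈ Set.Icc (0 : ℝ) 1)
    (ν : ∀ k : Fin s, Fin m → Measure (Fin (p k)))
    [∀ k i, IsProbabilityMeasure (ν k i)]
    (hνq : ∀ k i ℓ, ν k i {ℓ} = ENNReal.ofReal (q k i ℓ))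
    (r : ℕ)
    (P : Set (Fin m → ℝ))
    (hP : P = {x | (∀ i, 0 ≤ x i ∧ x i ≤ 1) ∧ (∑ i, x i = (n : ℝ)) ∧
      ∀ (k : Fin s) (ℓ : Fin (p k)),
        L k ℓ - δ * n ≤ ∑ i, q k i ℓ * x i ∧ ∑ i, q k i ℓ * x i ≤ U k ℓ + δ * n})
    (x : Fin m → ℝ) (hxP : x ∈ P)
    (hxopt : ∀ y ∈ P, ∑ i, w i * y i ≤ ∑ i, w i * x i)
    (hfrac : {i | 0 < x i ∧ x i < 1}.ncard ≤ r)
    (x' : Fin m → ℝ) (hx' : ∀ i, x' i = (⌈x i⌉ : ℝ))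
    (xstar : Fin m → ℝ) (hxstar01 : ∀ i, xstar i = 0 ∨ xstar i = 1)
    (hxstarsum : ∑ i, xstar i = (n : ℝ)) :
    ((n : ℝ) ≤ ∑ i, x' i ∧ ∑ i, x' i ≤ (n : ℝ) + r) ∧
    ENNReal.ofReal (1 - 4 * (Finset.univ.sup p) * s * Real.exp (-(δ ^ 2 * n) / 3)) ≤
      Measure.pi (fun k => Measure.pi (fun i => ν k i)) {g |
        ((∀ (k : Fin s) (ℓ : Fin (p k)),
            L k ℓ ≤ (({i | xstar i = 1 ∧ g k i = ℓ} : Set (Fin m)).ncard : ℝ) ∧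
            (({i | xstar i = 1 ∧ g k i = ℓ} : Set (Fin m)).ncard : ℝ) ≤ U k ℓ) →
          ∑ i, w i * xstar i ≤ ∑ i, w i * x' i) ∧
        (∀ (k : Fin s) (ℓ : Fin (p k)),
          L k ℓ - ((r : ℝ) + 2 * δ * n) ≤
            (({i | x' i = 1 ∧ g k i = ℓ} : Set (Fin m)).ncard : ℝ) ∧
          (({i | x' i = 1 ∧ g k i = ℓ} : Set (Fin m)).ncard : ℝ) ≤
            U k ℓ + ((r : ℝ) + 2 * δ * n))} := by
  rw [hP] at hxP
  obtain ⟨hx01, hxsum, hxfair⟩ := hxP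
  obtain rfl : x' = fun i ↦ (⌈x i⌉ : ℝ) := funext hx'
  have hxstarI : ∀ i, xstar i ∈ Set.Icc (0 : ℝ) 1 := fun i ↦ by
    rcases hxstar01 i with h | h <;> simp [h]
  have hνq' : ∀ k i ℓ, (ν k i).real {ℓ} = q k i ℓ := fun k i ℓ ↦ by
    rw [measureReal_def, hνq, ENNReal.toReal_ofReal (hq k i ℓ).1]
  refine ⟨?_, ofReal_one_sub_le_measure _ ((measureReal_union_le
    (labelDeviationEvent ν xstar (δ * n)) (labelDeviationEvent ν x (δ * n))).trans ?_) ?_⟩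
  · obtain ⟨hlow, hup⟩ := sum_le_sum_ceil_and_sum_ceil_le hx01
    rw [hxsum] at hlow hup
    exact ⟨hlow, hup.trans (by gcongr)⟩
  · have hstar := measureReal_labelDeviationEvent_le ν hxstarI hxstarsum hδ.1.le
    have hx := measureReal_labelDeviationEvent_le ν hx01 hxsum hδ.1.le
    rw [Fintype.card_fin] at hstar hx
    linarith
  · intro g hg
    simp only [labelDeviationEvent, Set.mem_compl_iff, Set.mem_union, Set.mem_ofPred_eq, not_or,
      not_exists, not_le, hνq'] at hg
    refine ⟨fun hfair ↦ ?_, fun k ℓ ↦ ?_⟩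
    · refine (hxopt xstar (hP ▸ ⟨hxstarI, hxstarsum, fun k ℓ ↦ ?_⟩)).trans
        (Finset.sum_le_sum fun i _ ↦ mul_le_mul_of_nonneg_left (Int.le_ceil _) (hw i))
      have hdev := abs_lt.1 (hg.1 k ℓ)
      rw [labelCount_eq_ncard hxstar01] at hdev
      constructor <;> linarith [hfair k ℓ]
    · rw [mul_assoc]
      exact ncard_ceil_label_bounds hx01 hfrac (g k) ℓ (hg.2 k ℓ).le (hxfair k ℓ)

/-- **General approximation guarantee for the Target problem (multiple protected
attributes).** With `r = 1 + ∑ k (p k − 1)` and `p̄ = max_k p k`, rounding up an optimal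
basic feasible solution `x` of the denoised LP gives `x'` with `n ≤ ∑ x' ≤ n + r`, and
for every fixed binary `x*` of cardinality `n`, with probability at least
`1 − 4 p̄ s exp (−δ² n / 3)` over the random assignments `g`: (i) if `x*` satisfies the
Target fairness constraints for `g`, then `x'` has value at least that of `x*`; and
(ii) `x'` violates each Target fairness constraint by at most `r + 2 δ n`. -/
theorem stmt10 (m n s : ℕ) (hm : 0 < m) (hn : 0 < n) (hs : 0 < s)
    (p : Fin s → ℕ) (hp : ∀ k, 0 < p k)
    (δ : ℝ) (hδ : δ ∈ Set.Ioo (0 : ℝ) 1)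
    (w : Fin m → ℝ) (hw : ∀ i, 0 ≤ w i)
    (L U : ∀ k : Fin s, Fin (p k) → ℝ)
    (hL : ∀ k ℓ, 0 ≤ L k ℓ) (hU : ∀ k ℓ, 0 ≤ U k ℓ)
    (q : ∀ k : Fin s, Fin m → Fin (p k) → ℝ)
    (hq : ∀ k i ℓ, q k i ℓ ∈ Set.Icc (0 : ℝ) 1)
    (hqsum : ∀ k i, ∑ ℓ, q k i ℓ = 1)
    (ν : ∀ k : Fin s, Fin m → Measure (Fin (p k)))
    [∀ k i, IsProbabilityMeasure (ν k i)]
    (hνq : ∀ k i ℓ, ν k i {ℓ} = ENNReal.ofReal (q k i ℓ))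
    (r : ℕ) (hr : r = 1 + ∑ k, (p k - 1))
    (P : Set (Fin m → ℝ))
    (hP : P = {x | (∀ i, 0 ≤ x i ∧ x i ≤ 1) ∧ (∑ i, x i = (n : ℝ)) ∧
      ∀ (k : Fin s) (ℓ : Fin (p k)),
        L k ℓ - δ * n ≤ ∑ i, q k i ℓ * x i ∧ ∑ i, q k i ℓ * x i ≤ U k ℓ + δ * n})
    (x : Fin m → ℝ) (hxP : x ∈ P)
    (hxopt : ∀ y ∈ P, ∑ i, w i * y i ≤ ∑ i, w i * x i)
    (hfrac : {i | 0 < x i ∧ x i < 1}.ncard ≤ r)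
    (x' : Fin m → ℝ) (hx' : ∀ i, x' i = (⌈x i⌉ : ℝ))
    (xstar : Fin m → ℝ) (hxstar01 : ∀ i, xstar i = 0 ∨ xstar i = 1)
    (hxstarsum : ∑ i, xstar i = (n : ℝ)) :
    ((n : ℝ) ≤ ∑ i, x' i ∧ ∑ i, x' i ≤ (n : ℝ) + r) ∧
    ENNReal.ofReal (1 - 4 * (Finset.univ.sup p) * s * Real.exp (-(δ ^ 2 * n) / 3)) ≤
      Measure.pi (fun k => Measure.pi (fun i => ν k i)) {g |
        ((∀ (k : Fin s) (ℓ : Fin (p k)),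
            L k ℓ ≤ (({i | xstar i = 1 ∧ g k i = ℓ} : Set (Fin m)).ncard : ℝ) ∧
            (({i | xstar i = 1 ∧ g k i = ℓ} : Set (Fin m)).ncard : ℝ) ≤ U k ℓ) →
          ∑ i, w i * xstar i ≤ ∑ i, w i * x' i) ∧
        (∀ (k : Fin s) (ℓ : Fin (p k)),
          L k ℓ - ((r : ℝ) + 2 * δ * n) ≤
            (({i | x' i = 1 ∧ g k i = ℓ} : Set (Fin m)).ncard : ℝ) ∧
          (({i | x' i = 1 ∧ g k i = ℓ} : Set (Fin m)).ncard : ℝ) ≤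
            U k ℓ + ((r : ℝ) + 2 * δ * n))} :=
  stmt10_general m n s p δ hδ w hw L U q hq ν hνq r P hP x hxP hxopt hfrac x' hx' xstar hxstar01
    hxstarsum
end

section
/- Fix positive integers m, n, p, a real δ ∈ (0,1), vectors L, U ∈ ℝ^p, and a matrix q ∈ [0,1]^{m×p} whose rows sum to 1. Let g : {1,…,m} → {1,…,p} be a random group assignment with independent labels and Pr[g(i) = ℓ] = q_{iℓ}. Then for every fixed x* ∈ {0,1}^m with ∑_{i=1}^m x*_i = n, with probability at least 1 − 2p·exp(−δ²n/3) over g, the following implication holds: if for all ℓ ∈ {1,…,p}, L_ℓ ≤ #{i : x*_i = 1 and g(i) = ℓ} ≤ U_ℓ, then for all ℓ ∈ {1,…,p}, L_ℓ − δn ≤ ∑_{i=1}^m q_{iℓ} x*_i ≤ U_ℓ + δn. -/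
open MeasureTheory ProbabilityTheory Finset
open scoped NNReal

/-! For each group `ℓ`, the number of selected items that land in `G ℓ` is a sum of `n`
independent `{0,1}`-valued variables with mean `∑ i, q i ℓ * x* i`, so by Hoeffding it deviates
from that mean by `δ n` or more with probability at most `2 exp (-2 δ² n) ≤ 2 exp (-δ² n / 3)`.
Outside the union of these `p` bad events, the Target bounds on the counts transfer to the
expected counts with slack `δ n`. -/

lemma Finset.sum_filter_eq_one_eq_sum_mul {ι : Type*} [Fintype ι] {x : ι → ℝ}
    (hx : ∀ i, x i = 0 ∨ x i = 1) (f : ι → ℝ) :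
    ∑ i with x i = 1, f i = ∑ i, f i * x i := by
  rw [sum_filter]
  refine sum_congr rfl fun i _ ↦ ?_
  rcases hx i with h | h <;> simp [h]

namespace MeasureTheory

lemma ofReal_one_sub_le_of_compl_subset {Ω : Type*} {mΩ : MeasurableSpace Ω}
    {μ : Measure Ω} [IsProbabilityMeasure μ] {s t : Set Ω} {x : ℝ} (hts : tᶜ ⊆ s)
    (ht : μ.real t ≤ x) : ENNReal.ofReal (1 - x) ≤ μ s := by
  have hcompl : μ.real sᶜ ≤ μ.real t := measureReal_mono (Set.compl_subset_comm.1 hts)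
  have hunion : 1 ≤ μ.real s + μ.real sᶜ := by
    simpa using measureReal_union_le (μ := μ) s sᶜ
  rw [← ofReal_measureReal]
  exact ENNReal.ofReal_le_ofReal (by linarith)

end MeasureTheory

namespace ProbabilityTheory

variable {Ω ι : Type*} {mΩ : MeasurableSpace Ω} {μ : Measure Ω}

lemma HasSubgaussianMGF.measureReal_abs_ge_le {X : Ω → ℝ} {c : ℝ≥0}
    (h : HasSubgaussianMGF X c μ) {ε : ℝ} (hε : 0 ≤ ε) :
    μ.real {ω | ε ≤ |X ω|} ≤ 2 * Real.exp (-ε ^ 2 / (2 * c)) := by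
  have hunion : {ω | ε ≤ |X ω|} = {ω | ε ≤ X ω} ∪ {ω | ε ≤ (-X) ω} := by
    ext ω
    simp [le_abs', le_neg, or_comm]
  rw [hunion, two_mul]
  exact (measureReal_union_le _ _).trans
    (add_le_add (h.measure_ge_le hε) (h.neg.measure_ge_le hε))

lemma hasSubgaussianMGF_sum_sub_integral_of_mem_Icc_zero_one [IsProbabilityMeasure μ]
    {X : ι → Ω → ℝ} (h_indep : iIndepFun X μ) (hX : ∀ i, AEMeasurable (X i) μ)
    (hX01 : ∀ i, ∀ᵐ ω ∂μ, X i ω ∈ Set.Icc 0 1) (s : Finset ι) :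
    HasSubgaussianMGF (fun ω ↦ ∑ i ∈ s, (X i ω - μ[X i])) (#s / 4) μ := by
  have h_indep' : iIndepFun (fun i ω ↦ X i ω - μ[X i]) μ :=
    h_indep.comp (fun i x ↦ x - ∫ ω, X i ω ∂μ) fun _ ↦ measurable_id.sub_const _
  have h := HasSubgaussianMGF.sum_of_iIndepFun h_indep' (s := s)
    fun i _ ↦ hasSubgaussianMGF_of_mem_Icc (hX i) (hX01 i)
  convert h using 1
  norm_num [div_eq_mul_inv]

variable {α : Type*} [Fintype ι] [MeasurableSpace α] {ν : ι → Measure α}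
  [∀ i, IsProbabilityMeasure (ν i)]

lemma hasSubgaussianMGF_pi_sum_indicator_sub {t : Set α} (ht : MeasurableSet t) (s : Finset ι) :
    HasSubgaussianMGF (fun g : ι → α ↦ ∑ i ∈ s, (t.indicator 1 (g i) - (ν i).real t))
      (#s / 4) (Measure.pi ν) := by
  have hmeas : Measurable (t.indicator (1 : α → ℝ)) := measurable_one.indicator ht
  have hmean i : ∫ g, t.indicator (1 : α → ℝ) (g i) ∂Measure.pi ν = (ν i).real t := by
    rw [integral_comp_eval hmeas.aestronglyMeasurable, integral_indicator_one ht]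
  simp_rw [← hmean]
  refine hasSubgaussianMGF_sum_sub_integral_of_mem_Icc_zero_one
    (iIndepFun_pi fun _ ↦ hmeas.aemeasurable) (fun i ↦ ?_) (fun i ↦ ae_of_all _ fun g ↦ ?_) s
  · exact hmeas.comp_aemeasurable (measurable_pi_apply i).aemeasurable
  · by_cases h : g i ∈ t <;> simp [h]

lemma measureReal_abs_card_filter_sub_ge_le [MeasurableSingletonClass α] [DecidableEq α]
    (s : Finset ι) (a : α) {ε : ℝ} (hε : 0 ≤ ε) :
    (Measure.pi ν).real {g | ε ≤ |(#{i ∈ s | g i = a} : ℝ) - ∑ i ∈ s, (ν i).real {a}|} ≤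
      2 * Real.exp (-2 * ε ^ 2 / #s) := by
  have h := (hasSubgaussianMGF_pi_sum_indicator_sub (ν := ν) (measurableSet_singleton a) s)
    |>.measureReal_abs_ge_le hε
  convert h using 3
  · simp [sum_sub_distrib, Set.indicator_apply, sum_boole]
  · push_cast
    ring

end ProbabilityTheory

theorem stmt11_general (m n p : ℕ) (hn : 0 < n)
    (δ : ℝ) (hδ : δ ∈ Set.Ioo (0 : ℝ) 1)
    (L U : Fin p → ℝ)
    (q : Fin m → Fin p → ℝ) (hq : ∀ i ℓ, q i ℓ ∈ Set.Icc (0 : ℝ) 1)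
    (ν : Fin m → Measure (Fin p)) [∀ i, IsProbabilityMeasure (ν i)]
    (hνq : ∀ i ℓ, ν i {ℓ} = ENNReal.ofReal (q i ℓ))
    (xstar : Fin m → ℝ) (hxstar01 : ∀ i, xstar i = 0 ∨ xstar i = 1)
    (hxstarsum : ∑ i, xstar i = (n : ℝ)) :
    ENNReal.ofReal (1 - 2 * p * Real.exp (-(δ ^ 2 * n) / 3)) ≤
      Measure.pi ν {g |
        (∀ ℓ, L ℓ ≤ (({i | xstar i = 1 ∧ g i = ℓ} : Set (Fin m)).ncard : ℝ) ∧
            (({i | xstar i = 1 ∧ g i = ℓ} : Set (Fin m)).ncard : ℝ) ≤ U ℓ) →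
        ∀ ℓ, L ℓ - δ * n ≤ ∑ i, q i ℓ * xstar i ∧
          ∑ i, q i ℓ * xstar i ≤ U ℓ + δ * n} := by
  classical
  set S : Finset (Fin m) := {i | xstar i = 1}
  have hcard : (#S : ℝ) = n := by
    simpa [hxstarsum] using sum_filter_eq_one_eq_sum_mul hxstar01 1
  have hncard (g : Fin m → Fin p) ℓ :
      ({i | xstar i = 1 ∧ g i = ℓ} : Set (Fin m)).ncard = #{i ∈ S | g i = ℓ} := by
    rw [Set.ncard_eq_toFinset_card']
    simp [S, filter_filter]
  have hmean ℓ : ∑ i, q i ℓ * xstar i = ∑ i ∈ S, (ν i).real {ℓ} := by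
    rw [← sum_filter_eq_one_eq_sum_mul hxstar01]
    exact sum_congr rfl fun i _ ↦ by simp [measureReal_def, hνq, (hq i ℓ).1]
  set T : Fin p → Set (Fin m → Fin p) :=
    fun ℓ ↦ {g | δ * n ≤ |(#{i ∈ S | g i = ℓ} : ℝ) - ∑ i ∈ S, (ν i).real {ℓ}|}
  have htail ℓ : (Measure.pi ν).real (T ℓ) ≤ 2 * Real.exp (-(δ ^ 2 * n) / 3) := by
    refine (measureReal_abs_card_filter_sub_ge_le S ℓ (by nlinarith [hδ.1])).trans ?_
    have hn' : (0 : ℝ) < n := Nat.cast_pos.mpr hn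
    rw [hcard, mul_le_mul_iff_right₀ two_pos, Real.exp_le_exp,
      div_le_div_iff₀ hn' three_pos]
    nlinarith [sq_nonneg δ]
  refine ofReal_one_sub_le_of_compl_subset (t := ⋃ ℓ, T ℓ) ?_ ?_
  · intro g hg htarget ℓ
    have hdev : |(#{i ∈ S | g i = ℓ} : ℝ) - ∑ i ∈ S, (ν i).real {ℓ}| < δ * n :=
      not_le.1 fun h ↦ hg (Set.mem_iUnion_of_mem ℓ h)
    obtain ⟨hL, hU⟩ := htarget ℓ
    rw [hncard] at hL hU
    rw [abs_lt] at hdev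
    rw [hmean]
    exact ⟨by linarith, by linarith⟩
  · calc (Measure.pi ν).real (⋃ ℓ, T ℓ)
        ≤ ∑ ℓ, (Measure.pi ν).real (T ℓ) := measureReal_iUnion_fintype_le T
      _ ≤ ∑ _ℓ : Fin p, 2 * Real.exp (-(δ ^ 2 * n) / 3) := sum_le_sum fun ℓ _ ↦ htail ℓ
      _ = 2 * p * Real.exp (-(δ ^ 2 * n) / 3) := by simp; ring

/-- **Target-feasible selections are denoised-feasible with high probability.**
For a fixed binary selection `x*` of cardinality `n`, with probability at least
`1 − 2 p exp (−δ² n / 3)` over the random group assignment `g`: if `x*` satisfies the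
Target fairness constraints `L ℓ ≤ |{i : x* i = 1} ∩ G ℓ| ≤ U ℓ` for all `ℓ`, then `x*`
satisfies the denoised constraints `L ℓ − δ n ≤ ∑ i, q i ℓ * x* i ≤ U ℓ + δ n`. -/
theorem stmt11 (m n p : ℕ) (hm : 0 < m) (hn : 0 < n) (hp : 0 < p)
    (δ : ℝ) (hδ : δ ∈ Set.Ioo (0 : ℝ) 1)
    (L U : Fin p → ℝ)
    (q : Fin m → Fin p → ℝ) (hq : ∀ i ℓ, q i ℓ ∈ Set.Icc (0 : ℝ) 1)
    (hqsum : ∀ i, ∑ ℓ, q i ℓ = 1)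
    (ν : Fin m → Measure (Fin p)) [∀ i, IsProbabilityMeasure (ν i)]
    (hνq : ∀ i ℓ, ν i {ℓ} = ENNReal.ofReal (q i ℓ))
    (xstar : Fin m → ℝ) (hxstar01 : ∀ i, xstar i = 0 ∨ xstar i = 1)
    (hxstarsum : ∑ i, xstar i = (n : ℝ)) :
    ENNReal.ofReal (1 - 2 * p * Real.exp (-(δ ^ 2 * n) / 3)) ≤
      Measure.pi ν {g |
        (∀ ℓ, L ℓ ≤ (({i | xstar i = 1 ∧ g i = ℓ} : Set (Fin m)).ncard : ℝ) ∧
            (({i | xstar i = 1 ∧ g i = ℓ} : Set (Fin m)).ncard : ℝ) ≤ U ℓ) →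
        ∀ ℓ, L ℓ - δ * n ≤ ∑ i, q i ℓ * xstar i ∧
          ∑ i, q i ℓ * xstar i ≤ U ℓ + δ * n} :=
  stmt11_general m n p hn δ hδ L U q hq ν hνq xstar hxstar01 hxstarsum
end

section
/- Let n ≥ 1 be an integer, t > 0 an integer, and a_1, …, a_n nonnegative integers with a_i ≤ t for all i. Define, for i ∈ {1,…,2n}, rational numbers q_{i1} := a_i/t if i ≤ n and q_{i1} := 0 if n < i ≤ 2n, and q_{i2} := 1 − q_{i1}. Then the following are equivalent: (1) there exists a subset S ⊆ {1,…,n} with ∑_{i∈S} a_i = t; (2) there exists x ∈ {0,1}^{2n} with ∑_{i=1}^{2n} x_i = n, ∑_{i=1}^{2n} q_{i1} x_i ≤ 1, and ∑_{i=1}^{2n} q_{i2} x_i ≤ n − 1. -/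
/-- **Correctness of the reduction from subset sum (NP-hardness of feasibility for
`p ≥ 2`).** With `q1 i = a i / t` for `i ≤ n` and `q1 i = 0` for the `n` dummy items, and
`q2 i = 1 − q1 i`, there is a subset of the `a i` summing to `t` iff there is a binary
selection of `n` of the `2n` items with `∑ q1 i * x i ≤ 1` and `∑ q2 i * x i ≤ n − 1`. -/
theorem stmt12 (n t : ℕ) (hn : 1 ≤ n) (ht : 0 < t)
    (a : Fin n → ℕ) (ha : ∀ i, a i ≤ t)
    (q1 q2 : Fin (2 * n) → ℚ)
    (hq1 : ∀ i : Fin (2 * n),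
      q1 i = if h : (i : ℕ) < n then ((a ⟨i, h⟩ : ℚ) / t) else 0)
    (hq2 : ∀ i, q2 i = 1 - q1 i) :
    (∃ S : Finset (Fin n), ∑ i ∈ S, a i = t) ↔
    (∃ x : Fin (2 * n) → ℚ, (∀ i, x i = 0 ∨ x i = 1) ∧
      (∑ i, x i = (n : ℚ)) ∧
      (∑ i, q1 i * x i ≤ 1) ∧
      (∑ i, q2 i * x i ≤ (n : ℚ) - 1)) := by
  have ht' : (t : ℚ) ≠ 0 := by positivity
  set e : Fin n ⊕ Fin n ≃ Fin (2 * n) := finSumFinEquiv.trans (finCongr (two_mul n).symm)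
    with he
  have hval_l : ∀ i : Fin n, ((e (Sum.inl i) : Fin (2 * n)) : ℕ) = (i : ℕ) := by
    intro i; simp [he]
  have hval_r : ∀ i : Fin n, ((e (Sum.inr i) : Fin (2 * n)) : ℕ) = n + i := by
    intro i; simp [he]; omega
  have hsum : ∀ f : Fin (2 * n) → ℚ,
      ∑ i, f i = (∑ i : Fin n, f (e (Sum.inl i))) + ∑ i : Fin n, f (e (Sum.inr i)) := by
    intro f
    rw [← Equiv.sum_comp e, Fintype.sum_sum_type]
  have hq1l : ∀ i : Fin n, q1 (e (Sum.inl i)) = (a i : ℚ) / t := by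
    intro i
    rw [hq1]
    have h : ((e (Sum.inl i) : Fin (2 * n)) : ℕ) < n := by rw [hval_l]; exact i.2
    rw [dif_pos h]
    have : (⟨((e (Sum.inl i) : Fin (2 * n)) : ℕ), h⟩ : Fin n) = i := Fin.ext (hval_l i)
    rw [this]
  have hq1r : ∀ i : Fin n, q1 (e (Sum.inr i)) = 0 := by
    intro i
    rw [hq1]
    have h : ¬ ((e (Sum.inr i) : Fin (2 * n)) : ℕ) < n := by rw [hval_r]; omega
    rw [dif_neg h]
  have hsplit : ∀ x : Fin (2 * n) → ℚ,
      ∑ i, q2 i * x i = (∑ i, x i) - ∑ i, q1 i * x i := by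
    intro x
    simp only [hq2, sub_mul, one_mul]
    rw [Finset.sum_sub_distrib]
  constructor
  · rintro ⟨S, hS⟩
    have hcard : S.card ≤ n := by
      simpa using Finset.card_le_univ S
    set x : Fin (2 * n) → ℚ := fun j =>
      if h : (j : ℕ) < n then (if (⟨(j : ℕ), h⟩ : Fin n) ∈ S then 1 else 0)
        else (if (j : ℕ) - n < n - S.card then 1 else 0) with hxdef
    have hx01 : ∀ i, x i = 0 ∨ x i = 1 := by
      intro i
      rw [hxdef]
      dsimp only
      split <;> split <;> simp
    have hxsum : ∑ i, x i = (n : ℚ) := by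
      rw [hsum]
      simp only [hxdef]
      have h1 : ∀ i : Fin n,
          (if h : ((e (Sum.inl i) : Fin (2*n)) : ℕ) < n then
            (if (⟨((e (Sum.inl i) : Fin (2*n)) : ℕ), h⟩ : Fin n) ∈ S then (1:ℚ) else 0)
          else (if ((e (Sum.inl i) : Fin (2*n)) : ℕ) - n < n - S.card then 1 else 0))
          = if i ∈ S then 1 else 0 := by
        intro i
        have h : ((e (Sum.inl i) : Fin (2 * n)) : ℕ) < n := by rw [hval_l]; exact i.2
        rw [dif_pos h]
        have hi : (⟨((e (Sum.inl i) : Fin (2*n)) : ℕ), h⟩ : Fin n) = i := Fin.ext (hval_l i)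
        rw [hi]
      have h2 : ∀ i : Fin n,
          (if h : ((e (Sum.inr i) : Fin (2*n)) : ℕ) < n then
            (if (⟨((e (Sum.inr i) : Fin (2*n)) : ℕ), h⟩ : Fin n) ∈ S then (1:ℚ) else 0)
          else (if ((e (Sum.inr i) : Fin (2*n)) : ℕ) - n < n - S.card then 1 else 0))
          = if (i : ℕ) < n - S.card then 1 else 0 := by
        intro i
        have h : ¬ ((e (Sum.inr i) : Fin (2 * n)) : ℕ) < n := by rw [hval_r]; omega
        rw [dif_neg h, hval_r, Nat.add_sub_cancel_left]
      rw [Finset.sum_congr rfl (fun i _ => h1 i), Finset.sum_congr rfl (fun i _ => h2 i)]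
      have hA : ∑ i : Fin n, (if i ∈ S then (1:ℚ) else 0) = S.card := by
        simp
      have hB : ∑ i : Fin n, (if (i : ℕ) < n - S.card then (1:ℚ) else 0)
          = (n - S.card : ℕ) := by
        rw [Fin.sum_univ_eq_sum_range (fun i => if i < n - S.card then (1:ℚ) else 0)]
        rw [Finset.sum_ite, Finset.sum_const, Finset.sum_const]
        have : (Finset.range n).filter (fun i => i < n - S.card)
            = Finset.range (n - S.card) := by
          ext i; simp; omega
        simp [this]
      rw [hA, hB]
      push_cast [Nat.cast_sub hcard]
      ring
    have hxq1 : ∑ i, q1 i * x i = 1 := by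
      rw [hsum]
      simp only [hxdef]
      have : ∑ i : Fin n, q1 (e (Sum.inr i)) *
          (if h : ((e (Sum.inr i) : Fin (2*n)) : ℕ) < n then
            (if (⟨((e (Sum.inr i) : Fin (2*n)) : ℕ), h⟩ : Fin n) ∈ S then (1:ℚ) else 0)
          else (if ((e (Sum.inr i) : Fin (2*n)) : ℕ) - n < n - S.card then 1 else 0)) = 0 := by
        apply Finset.sum_eq_zero
        intro i _
        rw [hq1r]; ring
      rw [this, add_zero]
      have h1 : ∀ i : Fin n, q1 (e (Sum.inl i)) *
          (if h : ((e (Sum.inl i) : Fin (2*n)) : ℕ) < n then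
            (if (⟨((e (Sum.inl i) : Fin (2*n)) : ℕ), h⟩ : Fin n) ∈ S then (1:ℚ) else 0)
          else (if ((e (Sum.inl i) : Fin (2*n)) : ℕ) - n < n - S.card then 1 else 0))
          = if i ∈ S then (a i : ℚ) / t else 0 := by
        intro i
        have h : ((e (Sum.inl i) : Fin (2 * n)) : ℕ) < n := by rw [hval_l]; exact i.2
        rw [dif_pos h, hq1l]
        have : (⟨((e (Sum.inl i) : Fin (2*n)) : ℕ), h⟩ : Fin n) = i := Fin.ext (hval_l i)
        rw [this]
        split <;> ring
      rw [Finset.sum_congr rfl (fun i _ => h1 i)]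
      rw [Finset.sum_ite_mem, Finset.univ_inter, ← Finset.sum_div]
      rw [← Nat.cast_sum, hS, div_self ht']
    exact ⟨x, hx01, hxsum, hxq1.le, by rw [hsplit, hxsum, hxq1]⟩
  · rintro ⟨x, hx01, hxn, hxq1, hxq2⟩
    have hge : (1 : ℚ) ≤ ∑ i, q1 i * x i := by
      rw [hsplit, hxn] at hxq2
      linarith
    have heq : ∑ i, q1 i * x i = 1 := le_antisymm hxq1 hge
    rw [hsum] at heq
    have hzero : ∑ i : Fin n, q1 (e (Sum.inr i)) * x (e (Sum.inr i)) = 0 :=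
      Finset.sum_eq_zero fun i _ => by rw [hq1r]; ring
    rw [hzero, add_zero] at heq
    have heq2 : ∑ i : Fin n, (a i : ℚ) * x (e (Sum.inl i)) = t := by
      have h1 : ∑ i : Fin n, q1 (e (Sum.inl i)) * x (e (Sum.inl i))
          = (∑ i : Fin n, (a i : ℚ) * x (e (Sum.inl i))) / t := by
        rw [Finset.sum_div]
        exact Finset.sum_congr rfl fun i _ => by rw [hq1l]; ring
      rw [h1, div_eq_one_iff_eq ht'] at heq
      exact heq
    set S : Finset (Fin n) := Finset.univ.filter (fun i => x (e (Sum.inl i)) = 1) with hSdef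
    refine ⟨S, ?_⟩
    have h2 : ∑ i ∈ S, (a i : ℚ) = ∑ i : Fin n, (a i : ℚ) * x (e (Sum.inl i)) := by
      rw [hSdef, Finset.sum_filter]
      refine Finset.sum_congr rfl fun i _ => ?_
      rcases hx01 (e (Sum.inl i)) with h | h <;> rw [h] <;> simp [h]
    rw [heq2] at h2
    have : ((∑ i ∈ S, a i : ℕ) : ℚ) = (t : ℚ) := by push_cast; exact h2
    exact_mod_cast this
end

section
/- Let k ≥ 1 and d ≥ 1 be integers, v ∈ ℝ^k with v_i > 0, c ∈ ℝ^d with c_ℓ > 0, and let W ∈ ℝ^{k×d} satisfy 0 ≤ W_{iℓ} ≤ c_ℓ for all i, ℓ. Set C := ∑_{ℓ=1}^d c_ℓ. Define, for i ∈ {1,…,2k}: utilities w'_i := v_i if i ≤ k and w'_i := 0 if k < i ≤ 2k; and probabilities q_{iℓ} := W_{iℓ}/C for i ≤ k and ℓ ≤ d, q_{i,d+1} := 1 − ∑_{ℓ=1}^d q_{iℓ} for i ≤ k, q_{iℓ} := 0 for i > k and ℓ ≤ d, and q_{i,d+1} := 1 for i > k. Define upper bounds U_ℓ := c_ℓ/C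 for ℓ ≤ d and U_{d+1} := 2k. Then the maximum of ∑_{i=1}^k v_i x_i over x ∈ {0,1}^k satisfying ∑_{i=1}^k W_{iℓ} x_i ≤ c_ℓ for all ℓ ∈ {1,…,d} equals the maximum of ∑_{i=1}^{2k} w'_i y_i over y ∈ {0,1}^{2k} satisfying ∑_{i=1}^{2k} y_i = k and ∑_{i=1}^{2k} q_{iℓ} y_i ≤ U_ℓ for all ℓ ∈ {1,…,d+1}. -/
open Finset

private lemma stmt13_sum_split {k : ℕ} (f : Fin (2 * k) → ℝ) :
    ∑ i, f i = (∑ a : Fin k, f ⟨a, by omega⟩) + ∑ b : Fin k, f ⟨k + b, by omega⟩ := by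
  rw [← Fintype.sum_bijective (finCongr (two_mul k).symm)
    (finCongr (two_mul k).symm).bijective
    (fun j => f (finCongr (two_mul k).symm j)) f (fun _ => rfl), Fin.sum_univ_add]
  rfl

/-- **Correctness of the reduction from `d`-dimensional knapsack (APX-hardness for
`p ≥ 3`).** The maximum value of the `d`-dimensional knapsack instance `(v, c, W)` equals
the maximum value of the constructed denoised selection instance with `2k` items
(`k` originals plus `k` zero-utility dummies), cardinality `k`, `d + 1` group values,
probabilities `q`, utilities `w'`, and upper bounds `U`. -/
theorem stmt13 (k d : ℕ) (hk : 1 ≤ k) (hd : 1 ≤ d)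
    (v : Fin k → ℝ) (hv : ∀ i, 0 < v i)
    (c : Fin d → ℝ) (hc : ∀ ℓ, 0 < c ℓ)
    (W : Fin k → Fin d → ℝ) (hW : ∀ i ℓ, 0 ≤ W i ℓ ∧ W i ℓ ≤ c ℓ)
    (C : ℝ) (hC : C = ∑ ℓ, c ℓ)
    (w' : Fin (2 * k) → ℝ)
    (hw' : ∀ i : Fin (2 * k), w' i = if h : (i : ℕ) < k then v ⟨i, h⟩ else 0)
    (q : Fin (2 * k) → Fin (d + 1) → ℝ)
    (hq : ∀ (i : Fin (2 * k)) (ℓ : Fin (d + 1)),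
      q i ℓ = if hi : (i : ℕ) < k then
          (if hℓ : (ℓ : ℕ) < d then W ⟨i, hi⟩ ⟨ℓ, hℓ⟩ / C
            else 1 - ∑ ℓ' : Fin d, W ⟨i, hi⟩ ℓ' / C)
        else (if (ℓ : ℕ) < d then 0 else 1))
    (U : Fin (d + 1) → ℝ)
    (hU : ∀ ℓ : Fin (d + 1),
      U ℓ = if h : (ℓ : ℕ) < d then c ⟨ℓ, h⟩ / C else (2 * k : ℝ)) :
    ∃ M : ℝ,
      IsGreatest {val | ∃ x : Fin k → ℝ, (∀ i, x i = 0 ∨ x i = 1) ∧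
          (∀ ℓ, ∑ i, W i ℓ * x i ≤ c ℓ) ∧ val = ∑ i, v i * x i} M ∧
      IsGreatest {val | ∃ y : Fin (2 * k) → ℝ, (∀ i, y i = 0 ∨ y i = 1) ∧
          (∑ i, y i = (k : ℝ)) ∧ (∀ ℓ, ∑ i, q i ℓ * y i ≤ U ℓ) ∧
          val = ∑ i, w' i * y i} M := by
  classical
  have hC0 : 0 < C := by
    rw [hC]
    exact Finset.sum_pos (fun ℓ _ => hc ℓ) ⟨⟨0, hd⟩, Finset.mem_univ _⟩
  set A : Set ℝ := {val | ∃ x : Fin k → ℝ, (∀ i, x i = 0 ∨ x i = 1) ∧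
      (∀ ℓ, ∑ i, W i ℓ * x i ≤ c ℓ) ∧ val = ∑ i, v i * x i} with hA
  set B : Set ℝ := {val | ∃ y : Fin (2 * k) → ℝ, (∀ i, y i = 0 ∨ y i = 1) ∧
      (∑ i, y i = (k : ℝ)) ∧ (∀ ℓ, ∑ i, q i ℓ * y i ≤ U ℓ) ∧
      val = ∑ i, w' i * y i} with hB
  -- basic facts about q
  have hqk : ∀ (a : Fin k) (h : (a : ℕ) < 2 * k) (ℓ : Fin d) (hℓ : (ℓ : ℕ) < d + 1),
      q ⟨a, h⟩ ⟨ℓ, hℓ⟩ = W a ℓ / C := by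
    intro a h ℓ hℓ
    rw [hq, dif_pos a.isLt, dif_pos ℓ.isLt]
  have hqd0 : ∀ (b : Fin k) (h : k + (b : ℕ) < 2 * k) (ℓ : Fin (d + 1)),
      (ℓ : ℕ) < d → q ⟨k + b, h⟩ ℓ = 0 := by
    intro b h ℓ hℓ
    rw [hq, dif_neg (Nat.not_lt.mpr (Nat.le_add_right k b)), if_pos hℓ]
  have hq1 : ∀ (i : Fin (2 * k)) (ℓ : Fin (d + 1)), q i ℓ ≤ 1 := by
    intro i ℓ
    rw [hq]
    by_cases hi : (i : ℕ) < k
    · rw [dif_pos hi]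
      by_cases hℓ : (ℓ : ℕ) < d
      · rw [dif_pos hℓ]
        calc W ⟨i, hi⟩ ⟨ℓ, hℓ⟩ / C ≤ c ⟨ℓ, hℓ⟩ / C := by
              gcongr
              exact (hW _ _).2
          _ ≤ C / C := by
              gcongr
              rw [hC]
              exact Finset.single_le_sum (fun ℓ' _ => (hc ℓ').le) (Finset.mem_univ _)
          _ = 1 := div_self hC0.ne'
      · rw [dif_neg hℓ]
        have : (0 : ℝ) ≤ ∑ ℓ' : Fin d, W ⟨i, hi⟩ ℓ' / C :=
          Finset.sum_nonneg fun ℓ' _ => div_nonneg (hW _ _).1 hC0.le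
        linarith
    · rw [dif_neg hi]
      by_cases hℓ : (ℓ : ℕ) < d <;> simp [hℓ]
  -- A ⊆ B
  have hAB : A ⊆ B := by
    rintro val ⟨x, hx01, hxc, rfl⟩
    set t := (Finset.univ.filter (fun i : Fin k => x i = 1)).card with htdef
    have ht : t ≤ k := by
      simpa using (Finset.card_filter_le Finset.univ (fun i : Fin k => x i = 1))
    have hsumx : ∑ i, x i = (t : ℝ) := by
      rw [show ∑ i, x i = ∑ i, (if x i = 1 then (1 : ℝ) else 0) from
        Finset.sum_congr rfl fun i _ => by rcases hx01 i with h | h <;> simp [h]]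
      rw [Finset.sum_boole]
    set y : Fin (2 * k) → ℝ := fun i => if h : (i : ℕ) < k then x ⟨i, h⟩
      else (if (i : ℕ) - k < k - t then 1 else 0) with hydef
    have hyk : ∀ (a : Fin k) (h : (a : ℕ) < 2 * k), y ⟨a, h⟩ = x a := by
      intro a h
      simp only [hydef]
      rw [dif_pos a.isLt]
    have hyd : ∀ (b : Fin k) (h : k + (b : ℕ) < 2 * k),
        y ⟨k + b, h⟩ = if (b : ℕ) < k - t then 1 else 0 := by
      intro b h
      simp only [hydef]
      rw [dif_neg (Nat.not_lt.mpr (Nat.le_add_right k b))]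
      simp
    have hy01 : ∀ i, y i = 0 ∨ y i = 1 := by
      intro i
      simp only [hydef]
      by_cases h : (i : ℕ) < k
      · simpa [h] using hx01 ⟨i, h⟩
      · by_cases h2 : (i : ℕ) - k < k - t <;> simp [h, h2]
    have hybd : ∀ i, 0 ≤ y i ∧ y i ≤ 1 := by
      intro i
      rcases hy01 i with h | h <;> simp [h]
    refine ⟨y, hy01, ?_, ?_, ?_⟩
    · rw [stmt13_sum_split]
      have h1 : ∑ a : Fin k, y ⟨a, by omega⟩ = ∑ a : Fin k, x a :=
        Finset.sum_congr rfl fun a _ => hyk a (by omega)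
      have h2 : ∑ b : Fin k, y ⟨k + b, by omega⟩ = ((k - t : ℕ) : ℝ) := by
        rw [Finset.sum_congr rfl fun b _ => hyd b (by omega),
          Fin.sum_univ_eq_sum_range (fun j => if j < k - t then (1 : ℝ) else 0) k,
          Finset.sum_boole]
        have hcard : (Finset.range k).filter (fun j => j < k - t) = Finset.range (k - t) := by
          ext j
          simp only [Finset.mem_filter, Finset.mem_range]
          omega
        rw [hcard, Finset.card_range]
      rw [h1, h2, hsumx]
      have : ((k - t : ℕ) : ℝ) = (k : ℝ) - t := by
        push_cast [Nat.cast_sub ht]; ring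
      rw [this]; ring
    · intro ℓ
      rw [hU ℓ]
      by_cases hℓ : (ℓ : ℕ) < d
      · rw [dif_pos hℓ, stmt13_sum_split]
        have h2 : ∑ b : Fin k, q ⟨k + b, by omega⟩ ℓ * y ⟨k + b, by omega⟩ = 0 :=
          Finset.sum_eq_zero fun b _ => by rw [hqd0 b (by omega) ℓ hℓ, zero_mul]
        have h1 : ∑ a : Fin k, q ⟨a, by omega⟩ ℓ * y ⟨a, by omega⟩
            = (∑ a : Fin k, W a ⟨ℓ, hℓ⟩ * x a) / C := by
          rw [Finset.sum_div]
          refine Finset.sum_congr rfl fun a _ => ?_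
          have : q ⟨a, by omega⟩ ℓ = W a ⟨ℓ, hℓ⟩ / C := by
            have := hqk a (by omega) ⟨ℓ, hℓ⟩ ℓ.isLt
            simpa using this
          rw [this, hyk a (by omega), div_mul_eq_mul_div]
        rw [h1, h2, add_zero]
        gcongr
        exact hxc ⟨ℓ, hℓ⟩
      · rw [dif_neg hℓ]
        calc ∑ i, q i ℓ * y i ≤ ∑ _i : Fin (2 * k), (1 : ℝ) := by
              refine Finset.sum_le_sum fun i _ => ?_
              calc q i ℓ * y i ≤ 1 * y i := by
                    exact mul_le_mul_of_nonneg_right (hq1 i ℓ) (hybd i).1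
                _ = y i := one_mul _
                _ ≤ 1 := (hybd i).2
          _ = (2 * k : ℝ) := by simp
    · rw [stmt13_sum_split (fun i => w' i * y i)]
      have h2 : ∑ b : Fin k, w' ⟨k + b, by omega⟩ * y ⟨k + b, by omega⟩ = 0 :=
        Finset.sum_eq_zero fun b _ => by
          rw [hw', dif_neg (Nat.not_lt.mpr (Nat.le_add_right k b)), zero_mul]
      have h1 : ∑ a : Fin k, w' ⟨a, by omega⟩ * y ⟨a, by omega⟩ = ∑ a : Fin k, v a * x a :=
        Finset.sum_congr rfl fun a _ => by
          rw [hw', dif_pos a.isLt, hyk a (by omega)]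
      rw [h1, h2, add_zero]
  -- B ⊆ A
  have hBA : B ⊆ A := by
    rintro val ⟨y, hy01, hysum, hyc, rfl⟩
    refine ⟨fun i => y ⟨i, by omega⟩, fun i => hy01 _, ?_, ?_⟩
    · intro ℓ
      have h := hyc ⟨ℓ, by omega⟩
      rw [hU, dif_pos ℓ.isLt, stmt13_sum_split] at h
      have h2 : ∑ b : Fin k, q ⟨k + b, by omega⟩ ⟨ℓ, by omega⟩ * y ⟨k + b, by omega⟩ = 0 :=
        Finset.sum_eq_zero fun b _ => by rw [hqd0 b (by omega) _ ℓ.isLt, zero_mul]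
      have h1 : ∑ a : Fin k, q ⟨a, by omega⟩ ⟨ℓ, by omega⟩ * y ⟨a, by omega⟩
          = (∑ a : Fin k, W a ℓ * y ⟨a, by omega⟩) / C := by
        rw [Finset.sum_div]
        refine Finset.sum_congr rfl fun a _ => ?_
        rw [hqk a (by omega) ℓ (by omega), div_mul_eq_mul_div]
      rw [h1, h2, add_zero] at h
      have h' := mul_le_mul_of_nonneg_right h hC0.le
      rw [div_mul_cancel₀ _ hC0.ne', div_mul_cancel₀ _ hC0.ne'] at h'
      simpa using h'
    · rw [stmt13_sum_split (fun i => w' i * y i)]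
      have h2 : ∑ b : Fin k, w' ⟨k + b, by omega⟩ * y ⟨k + b, by omega⟩ = 0 :=
        Finset.sum_eq_zero fun b _ => by
          rw [hw', dif_neg (Nat.not_lt.mpr (Nat.le_add_right k b)), zero_mul]
      have h1 : ∑ a : Fin k, w' ⟨a, by omega⟩ * y ⟨a, by omega⟩
          = ∑ a : Fin k, v a * y ⟨a, by omega⟩ :=
        Finset.sum_congr rfl fun a _ => by rw [hw', dif_pos a.isLt]
      rw [h1, h2, add_zero]
  have hABeq : A = B := le_antisymm hAB hBA
  -- A is finite and nonempty, hence has a greatest element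
  have hAfin : A.Finite := by
    refine Set.Finite.subset (Set.finite_range (fun s : Finset (Fin k) => ∑ i ∈ s, v i)) ?_
    rintro val ⟨x, hx01, _, rfl⟩
    refine ⟨Finset.univ.filter (fun i => x i = 1), ?_⟩
    show (∑ i ∈ Finset.univ.filter (fun i => x i = 1), v i) = _
    rw [Finset.sum_filter]
    exact Finset.sum_congr rfl fun i _ => by rcases hx01 i with h | h <;> simp [h]
  have hAne : A.Nonempty :=
    ⟨0, fun _ => 0, fun i => Or.inl rfl, fun ℓ => by simp [(hc ℓ).le], by simp⟩
  have hFne : hAfin.toFinset.Nonempty := by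
    rwa [Set.Finite.toFinset_nonempty]
  refine ⟨hAfin.toFinset.max' hFne, ⟨?_, ?_⟩, ?_⟩
  · have := hAfin.toFinset.max'_mem hFne
    rwa [Set.Finite.mem_toFinset] at this
  · intro b hb
    exact hAfin.toFinset.le_max' b (by rwa [Set.Finite.mem_toFinset])
  · rw [← hABeq]
    constructor
    · have := hAfin.toFinset.max'_mem hFne
      rwa [Set.Finite.mem_toFinset] at this
    · intro b hb
      exact hAfin.toFinset.le_max' b (by rwa [Set.Finite.mem_toFinset])
end
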